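/- arXiv:2210.06182 — 9 statements merged into one kernel-verified Lean document; each statement's English description precedes it below -/
import Mathlib

section
/- Let p be a prime number, n ≥ 1 an integer, and f ∈ ℤ[t] a polynomial with p ∤ f(1). Let ζ be a primitive p^n-th root of unity in the p^n-th cyclotomic field ℚ(ζ_{p^n}). Then the field norm N = Nr_{ℚ(ζ_{p^n})/ℚ}(f(ζ)) = ∏_{0 ≤ i < p^n, gcd(i,p)=1} f(ζ^i) is a rational integer congruent to 1 modulo p^n. -/
set_option maxHeartbeats 1000000
set_option synthInstance.maxHeartbeats 200000

open Complex in
lemma prod_pair_nonneg_aux {ι : Type*} [DecidableEq ι] (g : ι → ℂ) (e : ι → ι)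
    (hinv : ∀ i, e (e i) = i) (hne : ∀ i, e i ≠ i)
    (hg : ∀ i, g (e i) = (starRingEnd ℂ) (g i)) (s : Finset ι) :
    (∀ i ∈ s, e i ∈ s) → ∃ r : ℝ, 0 ≤ r ∧ ∏ i ∈ s, g i = (r : ℂ) := by
  induction s using Finset.strongInduction with
  | _ s ih =>
    intro hs
    rcases s.eq_empty_or_nonempty with rfl | ⟨a, ha⟩
    · exact ⟨1, zero_le_one, by simp⟩
    have hea : e a ∈ s := hs a ha
    have hnea : e a ≠ a := hne a
    set t : Finset ι := (s.erase a).erase (e a) with htdef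
    have hts : t ⊆ s := (Finset.erase_subset _ _).trans (Finset.erase_subset _ _)
    have hat : a ∉ t := by simp [htdef]
    have heat : e a ∉ t := by simp [htdef]
    have hst : s = insert a (insert (e a) t) := by
      rw [htdef, Finset.insert_erase (by simp [Finset.mem_erase, hnea, hea]),
        Finset.insert_erase ha]
    have htss : t ⊂ s := ⟨hts, fun h => hat (h ha)⟩
    have hclosed : ∀ i ∈ t, e i ∈ t := by
      intro i hi
      have his : i ∈ s := hts hi
      have hia : i ≠ a := by rintro rfl; exact hat hi
      have hiea : i ≠ e a := by rintro rfl; exact heat hi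
      have hes : e i ∈ s := hs i his
      simp only [htdef, Finset.mem_erase]
      refine ⟨?_, ?_, hes⟩
      · intro h
        exact hia (by rw [← hinv i, h, hinv])
      · intro h
        exact hiea (by rw [← hinv i, h])
    obtain ⟨r, hr0, hr⟩ := ih t htss hclosed
    refine ⟨Complex.normSq (g a) * r, mul_nonneg (normSq_nonneg _) hr0, ?_⟩
    have hains : a ∉ insert (e a) t := by
      simp only [Finset.mem_insert]
      rintro (h | h)
      · exact hnea h.symm
      · exact hat h
    rw [hst, Finset.prod_insert hains, Finset.prod_insert heat, hr, hg a, ← mul_assoc,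
      Complex.mul_conj]
    push_cast
    ring

theorem aux_cyclo_norm (p n : ℕ) (hp : p.Prime) (hn : 1 ≤ n)
    (f : Polynomial ℤ) (hf : ¬ (p : ℤ) ∣ f.eval 1)
    (q : ℕ+) (hq : (q : ℕ) = p ^ n)
    (K : Type*) [Field K] [Algebra ℚ K] [IsCyclotomicExtension {(q : ℕ)} ℚ K]
    (ζ : K) (hζ : IsPrimitiveRoot ζ (p ^ n)) :
    ∃ N : ℤ, (N : ℚ) = Algebra.norm ℚ (Polynomial.aeval ζ f) ∧
      N ≡ 1 [ZMOD ((p : ℤ) ^ n)] := by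
  classical
  haveI : Fact p.Prime := ⟨hp⟩
  haveI hNF : NumberField K := IsCyclotomicExtension.numberField {(q : ℕ)} ℚ K
  have hqpos : 0 < p ^ n := pow_pos hp.pos n
  have hpn2 : 2 ≤ p ^ n := by
    calc 2 ≤ p := hp.two_le
    _ = p ^ 1 := (pow_one p).symm
    _ ≤ p ^ n := Nat.pow_le_pow_right hp.pos hn
  have hζint : IsIntegral ℤ ζ := hζ.isIntegral hqpos
  set ζ' : NumberField.RingOfIntegers K := ⟨ζ, hζint⟩ with hζ'def
  have hcoeζ : (algebraMap (NumberField.RingOfIntegers K) K) ζ' = ζ := rfl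
  set α : K := Polynomial.aeval ζ f with hαdef
  set α' : NumberField.RingOfIntegers K := Polynomial.aeval ζ' f with hα'def
  have hcoeα : (algebraMap (NumberField.RingOfIntegers K) K) α' = α := by
    rw [hα'def, hαdef, ← hcoeζ, Polynomial.aeval_algebraMap_apply]
  have hα0 : α ≠ 0 := by
    intro h0
    have hdvd : minpoly ℤ ζ ∣ f := minpoly.isIntegrallyClosed_dvd hζint h0
    rw [← Polynomial.cyclotomic_eq_minpoly hζ hqpos] at hdvd
    obtain ⟨g, hg⟩ := hdvd
    apply hf
    have hev := congrArg (Polynomial.eval 1) hg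
    obtain ⟨m, rfl⟩ : ∃ m, n = m + 1 := ⟨n - 1, (Nat.succ_pred_eq_of_pos hn).symm⟩
    rw [Polynomial.eval_mul, Polynomial.eval_one_cyclotomic_prime_pow] at hev
    exact ⟨g.eval 1, hev⟩
  have hα'0 : α' ≠ 0 := by
    intro h0
    apply hα0
    rw [← hcoeα, h0, map_zero]
  have hζ'pow : ζ' ^ p ^ n = 1 := by
    have h : (algebraMap (NumberField.RingOfIntegers K) K) (ζ' ^ p ^ n) =
        (algebraMap (NumberField.RingOfIntegers K) K) 1 := by
      rw [map_pow, hcoeζ, map_one, hζ.pow_eq_one]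
    exact NumberField.RingOfIntegers.eq_iff.mp h
  -- coprimality of α' with p
  have hcop : Ideal.span {(p : NumberField.RingOfIntegers K)} ⊔ Ideal.span {α'} = ⊤ := by
    by_contra hne
    obtain ⟨M, hMmax, hM⟩ := Ideal.exists_le_maximal _ hne
    haveI := hMmax
    have hpmem : (p : NumberField.RingOfIntegers K) ∈ M :=
      hM (Ideal.mem_sup_left (Ideal.mem_span_singleton_self _))
    have hαmem : α' ∈ M := hM (Ideal.mem_sup_right (Ideal.mem_span_singleton_self _))
    have hpF : ((p : ℕ) : NumberField.RingOfIntegers K ⧸ M) = 0 := by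
      rw [← map_natCast (Ideal.Quotient.mk M), Ideal.Quotient.eq_zero_iff_mem]
      exact hpmem
    haveI hchar : CharP (NumberField.RingOfIntegers K ⧸ M) p := by
      rcases hp.eq_one_or_self_of_dvd _ (ringChar.dvd hpF) with h1 | hpp
      · exfalso
        haveI := ringChar.of_eq h1
        have h10 : ((1 : ℕ) : NumberField.RingOfIntegers K ⧸ M) = 0 :=
          (CharP.cast_eq_zero_iff _ 1 1).mpr dvd_rfl
        rw [Nat.cast_one] at h10
        exact one_ne_zero h10
      · exact ringChar.of_eq hpp
    set z : NumberField.RingOfIntegers K ⧸ M := Ideal.Quotient.mk M ζ' with hzdef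
    have hz1 : z ^ p ^ n = 1 := by rw [hzdef, ← map_pow, hζ'pow, map_one]
    have hzone : z = 1 := by
      have h2 : (z - 1) ^ p ^ n = 0 := by
        rw [sub_pow_char_pow, hz1, one_pow, sub_self]
      exact sub_eq_zero.mp (pow_eq_zero_iff hqpos.ne' |>.mp h2)
    have hev0 : ((f.eval 1 : ℤ) : NumberField.RingOfIntegers K ⧸ M) = 0 := by
      have hmk : Ideal.Quotient.mk M α' = 0 := (Ideal.Quotient.eq_zero_iff_mem).mpr hαmem
      rw [hα'def] at hmk
      rw [show Ideal.Quotient.mk M (Polynomial.aeval ζ' f) = Polynomial.aeval z f from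
        (Polynomial.aeval_algHom_apply (Ideal.Quotient.mkₐ ℤ M) ζ' f).symm, hzone] at hmk
      rwa [Polynomial.aeval_def, Polynomial.eval₂_at_one] at hmk
    rw [CharP.intCast_eq_zero_iff (NumberField.RingOfIntegers K ⧸ M) p] at hev0
    exact hf hev0
  -- key congruence for ideals coprime to p
  have key : ∀ I : Ideal (NumberField.RingOfIntegers K),
      Ideal.span {(p : NumberField.RingOfIntegers K)} ⊔ I = ⊤ → I ≠ 0 →
      Ideal.absNorm I ≡ 1 [MOD p ^ n] := by
    intro I
    refine UniqueFactorizationMonoid.induction_on_prime I ?_ ?_ ?_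
    · intro _ h0
      exact absurd rfl h0
    · intro J hJ _ _
      rw [Ideal.isUnit_iff.mp hJ, Ideal.absNorm_top]
    · intro J P hJ0 hP ih hcopPJ _
      have hcopJ : Ideal.span {(p : NumberField.RingOfIntegers K)} ⊔ J = ⊤ :=
        top_le_iff.mp (hcopPJ ▸ sup_le_sup_left Ideal.mul_le_right _)
      have hcopP : Ideal.span {(p : NumberField.RingOfIntegers K)} ⊔ P = ⊤ :=
        top_le_iff.mp (hcopPJ ▸ sup_le_sup_left Ideal.mul_le_left _)
      rw [map_mul Ideal.absNorm]
      have h1 := ih hcopJ hJ0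
      have hPbot : P ≠ ⊥ := hP.ne_zero
      haveI hPprime : P.IsPrime := Ideal.isPrime_of_prime hP
      haveI hPmax : P.IsMaximal := hPprime.isMaximal hPbot
      haveI hfinF : Finite (NumberField.RingOfIntegers K ⧸ P) := by
        rw [← Ideal.absNorm_ne_zero_iff, Ne, Ideal.absNorm_eq_zero_iff]
        exact hPbot
      have hpnotmem : (p : NumberField.RingOfIntegers K) ∉ P := by
        intro hmem
        have hle : Ideal.span {(p : NumberField.RingOfIntegers K)} ≤ P := by
          rwa [Ideal.span_le, Set.singleton_subset_iff]
        exact hPprime.ne_top (top_le_iff.mp (hcopP ▸ sup_le hle le_rfl))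
      set z : NumberField.RingOfIntegers K ⧸ P := Ideal.Quotient.mk P ζ' with hzdef
      have hzq : z ^ p ^ n = 1 := by rw [hzdef, ← map_pow, hζ'pow, map_one]
      obtain ⟨m, rfl⟩ : ∃ m, n = m + 1 := ⟨n - 1, (Nat.succ_pred_eq_of_pos hn).symm⟩
      have hznot : ¬ z ^ p ^ m = 1 := by
        intro hzm
        have hηne : ζ' ^ p ^ m ≠ 1 := by
          intro h1
          have h1K : ζ ^ p ^ m = 1 := by
            have h2 := congrArg (algebraMap (NumberField.RingOfIntegers K) K) h1
            rwa [map_pow, hcoeζ, map_one] at h2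
          exact hζ.pow_ne_one_of_pos_of_lt (pow_pos hp.pos m).ne'
            (Nat.pow_lt_pow_right hp.one_lt (Nat.lt_succ_self m)) h1K
        have hgeom : (∑ j ∈ Finset.range p, (ζ' ^ p ^ m) ^ j) = 0 := by
          have hmul := geom_sum_mul (ζ' ^ p ^ m) p
          have hpow : (ζ' ^ p ^ m) ^ p = 1 := by
            rw [← pow_mul, ← pow_succ]
            exact hζ'pow
          rw [hpow, sub_self] at hmul
          rcases mul_eq_zero.mp hmul with h | h
          · exact h
          · exact absurd (sub_eq_zero.mp h) hηne
        have hpP : ((p : ℕ) : NumberField.RingOfIntegers K ⧸ P) = 0 := by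
          have hsum := congrArg (Ideal.Quotient.mk P) hgeom
          rw [map_sum, map_zero] at hsum
          calc ((p : ℕ) : NumberField.RingOfIntegers K ⧸ P)
              = ∑ _j ∈ Finset.range p, (1 : NumberField.RingOfIntegers K ⧸ P) := by simp
            _ = ∑ j ∈ Finset.range p, Ideal.Quotient.mk P ((ζ' ^ p ^ m) ^ j) := by
                refine Finset.sum_congr rfl fun j _ => ?_
                rw [map_pow, map_pow, ← hzdef, hzm, one_pow]
            _ = 0 := hsum
        apply hpnotmem
        rw [← Ideal.Quotient.eq_zero_iff_mem, map_natCast]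
        exact hpP
      letI : Field (NumberField.RingOfIntegers K ⧸ P) := Ideal.Quotient.field P
      have hz0 : z ≠ 0 := by
        intro h0
        rw [h0, zero_pow hqpos.ne'] at hzq
        exact zero_ne_one hzq
      have hord : orderOf (Units.mk0 z hz0) = p ^ (m + 1) := by
        rw [← orderOf_units]
        exact orderOf_eq_prime_pow (by simpa using hznot) (by simpa using hzq)
      have hdvd : p ^ (m + 1) ∣ Nat.card (NumberField.RingOfIntegers K ⧸ P)ˣ :=
        hord ▸ orderOf_dvd_natCard _
      have hcard : Nat.card (NumberField.RingOfIntegers K ⧸ P)ˣ = Ideal.absNorm P - 1 := by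
        rw [Nat.card_units, Ideal.absNorm_apply, Submodule.cardQuot_apply]
      have h1le : 1 ≤ Ideal.absNorm P := by
        rw [Nat.one_le_iff_ne_zero, Ne, Ideal.absNorm_eq_zero_iff]
        exact hPbot
      have h2 : Ideal.absNorm P ≡ 1 [MOD p ^ (m + 1)] :=
        ((Nat.modEq_iff_dvd' h1le).mpr (hcard ▸ hdvd)).symm
      simpa using h2.mul h1
  have hcast : ((Algebra.norm ℤ α' : ℤ) : ℚ) = Algebra.norm ℚ α := by
    have h1 := Algebra.coe_norm_int (K := K) α'
    rw [NumberField.RingOfIntegers.coe_eq_algebraMap, hcoeα] at h1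
    exact h1.trans (congrArg (fun i : Algebra ℚ K => (@Algebra.norm ℚ K _ _ i) α)
      (Subsingleton.elim _ _))
  -- positivity when p ^ n ≥ 3
  have hpos : 3 ≤ p ^ n → 0 ≤ Algebra.norm ℤ α' := by
    intro h3
    have hprod := Algebra.norm_eq_prod_embeddings ℚ ℂ α
    set e : (K →ₐ[ℚ] ℂ) → (K →ₐ[ℚ] ℂ) :=
      fun σ => ((Complex.conjAe.restrictScalars ℚ).toAlgHom).comp σ with hedef
    have hinv : ∀ σ, e (e σ) = σ := by
      intro σ
      ext x
      simp [hedef]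
    have hne : ∀ σ, e σ ≠ σ := by
      intro σ hσ
      have hζσ : IsPrimitiveRoot (σ ζ) (p ^ n) := hζ.map_of_injective σ.injective
      have hconj : (starRingEnd ℂ) (σ ζ) = σ ζ := by
        conv_rhs => rw [← hσ]
        simp [hedef]
      have hre : ((σ ζ).re : ℂ) = σ ζ := Complex.conj_eq_iff_re.mp hconj
      have hr1 : ((σ ζ).re) ^ (p ^ n) = 1 := by
        have hpow := hζσ.pow_eq_one
        rw [← hre] at hpow
        exact_mod_cast hpow
      have hsq : (σ ζ) ^ 2 = 1 := by
        rcases (pow_eq_one_iff_of_ne_zero hqpos.ne').mp hr1 with h1 | ⟨h1, _⟩ <;>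
          rw [← hre, h1] <;> norm_num
      have := Nat.le_of_dvd (by norm_num) (hζσ.dvd_of_pow_eq_one 2 hsq)
      omega
    have hg : ∀ σ : K →ₐ[ℚ] ℂ, (e σ) α = (starRingEnd ℂ) (σ α) := by
      intro σ
      simp [hedef]
    obtain ⟨r, hr0, hr⟩ :=
      prod_pair_nonneg_aux (fun σ : K →ₐ[ℚ] ℂ => σ α) e hinv hne hg Finset.univ
        (fun i _ => Finset.mem_univ _)
    have hAr : algebraMap ℚ ℂ (Algebra.norm ℚ α) = (r : ℂ) := by
      rw [hprod]
      exact hr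
    have hratreal : ((Algebra.norm ℚ α : ℝ) : ℂ) = (r : ℂ) := by
      rw [← hAr]
      push_cast
      rfl
    have hratr : ((Algebra.norm ℚ α : ℝ)) = r := Complex.ofReal_inj.mp hratreal
    have hnn : 0 ≤ Algebra.norm ℚ α := by
      rw [← Rat.cast_nonneg (K := ℝ), hratr]
      exact hr0
    rw [← hcast] at hnn
    exact_mod_cast hnn
  -- assemble
  refine ⟨Algebra.norm ℤ α', hcast, ?_⟩
  have hspan0 : Ideal.span {α'} ≠ 0 := by
    rw [Ne, Ideal.zero_eq_bot, Ideal.span_singleton_eq_bot]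
    exact hα'0
  have hnat := key _ hcop hspan0
  rw [Ideal.absNorm_span_singleton] at hnat
  have h1le : 1 ≤ (Algebra.norm ℤ α').natAbs := by
    by_contra hlt
    have h0' : (Algebra.norm ℤ α').natAbs = 0 := by omega
    rw [h0'] at hnat
    have h01 : 0 % p ^ n = 1 % p ^ n := hnat
    rw [Nat.zero_mod, Nat.mod_eq_of_lt (by omega)] at h01
    omega
  rcases eq_or_lt_of_le hpn2 with h2 | h3
  · -- p ^ n = 2
    have hp2 : ((p : ℤ)) ^ n = 2 := by
      have := congrArg (Nat.cast : ℕ → ℤ) h2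
      push_cast at this
      omega
    rw [hp2]
    have hoddn : (Algebra.norm ℤ α').natAbs % 2 = 1 := by
      have h01 : (Algebra.norm ℤ α').natAbs % (p ^ n) = 1 % (p ^ n) := hnat
      rw [← h2] at h01
      omega
    have hodd : Algebra.norm ℤ α' % 2 = 1 :=
      Int.odd_iff.mp (Int.natAbs_odd.mp (Nat.odd_iff.mpr hoddn))
    exact Int.modEq_iff_dvd.mpr (by omega)
  · -- 3 ≤ p ^ n
    have h0 := hpos h3
    have hNeq : (((Algebra.norm ℤ α').natAbs : ℤ)) = Algebra.norm ℤ α' :=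
      Int.natAbs_of_nonneg h0
    have hdvdn : p ^ n ∣ (Algebra.norm ℤ α').natAbs - 1 :=
      (Nat.modEq_iff_dvd' h1le).mp hnat.symm
    have hdvdz : ((p : ℤ)) ^ n ∣ Algebra.norm ℤ α' - 1 := by
      have hz := Int.natCast_dvd_natCast.mpr hdvdn
      rw [Nat.cast_sub h1le, hNeq, Nat.cast_pow] at hz
      exact_mod_cast hz
    exact Int.ModEq.symm (Int.modEq_iff_dvd.mpr hdvdz)

/-- Let `p` be prime, `n ≥ 1`, `f ∈ ℤ[t]` with `p ∤ f(1)`, and `ζ` a primitive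
`p^n`-th root of unity in the `p^n`-th cyclotomic field. Then the field norm
`Nr_{ℚ(ζ_{p^n})/ℚ}(f(ζ))` is a rational integer congruent to `1` modulo `p^n`. -/
theorem norm_of_eval_at_primitive_root_congruent_one
    (p n : ℕ) (hp : p.Prime) (hn : 1 ≤ n)
    (f : Polynomial ℤ) (hf : ¬ (p : ℤ) ∣ f.eval 1)
    (q : ℕ+) (hq : (q : ℕ) = p ^ n)
    (ζ : CyclotomicField q ℚ) (hζ : IsPrimitiveRoot ζ (p ^ n)) :
    ∃ N : ℤ, (N : ℚ) = Algebra.norm ℚ (Polynomial.aeval ζ f) ∧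
      N ≡ 1 [ZMOD ((p : ℤ) ^ n)] :=
  by obtain ⟨N, h1, h2⟩ := @aux_cyclo_norm p n hp hn f hf q hq (CyclotomicField q ℚ) _
       (CyclotomicField.algebra _ _) inferInstance ζ hζ
     exact ⟨N, h1.trans (congrArg (fun i : Algebra ℚ (CyclotomicField q ℚ) =>
       (@Algebra.norm ℚ _ _ _ i) (Polynomial.aeval ζ f)) (Subsingleton.elim _ _)), h2⟩
end

section
/- Let f be a nonzero polynomial with integer coefficients and n ≥ 1 an integer such that Res(t^n − 1, f(t)) ≠ 0. Then Res(t^n − 1, f(t)) > 0 if and only if either (i) n is even and f(1)·f(−1) > 0, or (ii) n is odd and f(1) > 0. -/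
/-- The `n`-th cyclic resultant of `f ∈ ℤ[t]`, computed in `ℂ` as
`Res(t^n − 1, f(t)) = ∏_{ζ^n = 1} f(ζ)`, the product over all complex `n`-th roots of unity. -/
noncomputable def cyclicResultantC (n : ℕ) (f : Polynomial ℤ) : ℂ :=
  ((Polynomial.nthRoots n (1 : ℂ)).map (fun ζ => Polynomial.aeval ζ f)).prod

/-!
Since `f` has real coefficients, `f(ζ̄) = conj f(ζ)`, and the non-real `n`-th roots of unity come
in conjugate pairs. Hence the resultant is `f(1) f(-1) |Q|²` for even `n` and `f(1) |Q|²` for odd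
`n`, where `Q` is the product of `f(ζ)` over the roots of unity in the upper half plane; when the
resultant is nonzero, `|Q|² > 0` and the sign is that of `f(1) f(-1)`, resp. `f(1)`.
-/

open Polynomial Complex ComplexConjugate Finset

lemma Polynomial.aeval_conj_int (f : ℤ[X]) (z : ℂ) : aeval (conj z) f = conj (aeval z f) :=
  aeval_algHom_apply (conjAe.restrictScalars ℤ) z f

theorem Complex.prod_eq_prod_filter_im_eq_zero_mul_normSq {s : Finset ℂ}
    (hs : ∀ z ∈ s, conj z ∈ s) {g : ℂ → ℂ} (hg : ∀ z, g (conj z) = conj (g z)) :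
    ∏ z ∈ s, g z = (∏ z ∈ s with z.im = 0, g z) * normSq (∏ z ∈ s with 0 < z.im, g z) := by
  have hupper : {z ∈ s | z.im ≠ 0 ∧ 0 < z.im} = {z ∈ s | 0 < z.im} :=
    filter_congr fun z _ => and_iff_right_of_imp LT.lt.ne'
  have hlower : {z ∈ s | z.im ≠ 0 ∧ ¬0 < z.im} = {z ∈ s | z.im < 0} :=
    filter_congr fun z _ => ⟨fun h => lt_of_le_of_ne (not_lt.1 h.2) h.1, fun h => ⟨h.ne, h.not_gt⟩⟩
  have hconj : ∏ z ∈ s with z.im < 0, g z = conj (∏ z ∈ s with 0 < z.im, g z) := by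
    rw [map_prod]
    refine prod_nbij' conj conj (fun z hz => ?_) (fun z hz => ?_) (fun z _ => conj_conj z)
      (fun z _ => conj_conj z) (fun z _ => by rw [← hg, conj_conj])
    all_goals
      simp only [mem_filter] at hz ⊢
      exact ⟨hs z hz.1, by simpa using hz.2⟩
  rw [← prod_filter_mul_prod_filter_not s (fun z => z.im = 0),
    ← prod_filter_mul_prod_filter_not {z ∈ s | z.im ≠ 0} (fun z => 0 < z.im),
    filter_filter, filter_filter, hupper, hlower, hconj, mul_conj]

theorem Complex.filter_nthRootsFinset_one_im_eq_zero {n : ℕ} (hn : n ≠ 0) :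
    {z ∈ nthRootsFinset n (1 : ℂ) | z.im = 0} = if Even n then {1, -1} else {1} := by
  ext z
  have hmem : z ^ n = 1 ∧ z.im = 0 ↔ z = 1 ∨ z = -1 ∧ Even n := by
    constructor
    · rintro ⟨hz, him⟩
      have hre : z = (z.re : ℂ) := ext rfl (by simp [him])
      rw [hre] at hz
      rcases (pow_eq_one_iff_of_ne_zero (a := z.re) hn).1 (by exact_mod_cast hz) with h | ⟨h, he⟩
      · rw [hre, h, ofReal_one]
        exact Or.inl rfl
      · rw [hre, h, ofReal_neg, ofReal_one]
        exact Or.inr ⟨rfl, he⟩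
    · rintro (rfl | ⟨rfl, he⟩)
      · simp
      · simp [he.neg_one_pow]
  rw [mem_filter, mem_nthRootsFinset (Nat.pos_of_ne_zero hn), hmem]
  split_ifs with he <;> simp [he]

theorem cyclicResultantC_eq_prod (f : ℤ[X]) {n : ℕ} (hn : n ≠ 0) :
    cyclicResultantC n f = ∏ z ∈ nthRootsFinset n (1 : ℂ), aeval z f := by
  classical
  rw [cyclicResultantC, nthRootsFinset_def, Finset.prod,
    Multiset.toFinset_val, (isPrimitiveRoot_exp n hn).nthRoots_one_nodup.dedup]

theorem cyclicResultantC_eq_mul_normSq (f : ℤ[X]) {n : ℕ} (hn : n ≠ 0) :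
    cyclicResultantC n f = ((f.eval 1 * if Even n then f.eval (-1) else 1 : ℤ) : ℂ) *
      normSq (∏ z ∈ nthRootsFinset n (1 : ℂ) with 0 < z.im, aeval z f) := by
  have hclosed : ∀ z ∈ nthRootsFinset n (1 : ℂ), conj z ∈ nthRootsFinset n 1 :=
    fun z hz => map_mem_nthRootsFinset_one hz _
  rw [cyclicResultantC_eq_prod f hn, prod_eq_prod_filter_im_eq_zero_mul_normSq hclosed
    (aeval_conj_int f), filter_nthRootsFinset_one_im_eq_zero hn]
  have hint (m : ℤ) : aeval (m : ℂ) f = f.eval m := by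
    rw [aeval_def, eval₂_at_intCast, algebraMap_int_eq, eq_intCast, Int.cast_id]
  congr 1
  split_ifs with he
  · rw [prod_pair (by norm_num)]
    simpa using congr($(hint 1) * $(hint (-1)))
  · simpa using hint 1

theorem cyclic_resultant_pos_iff_general
    (f : Polynomial ℤ) (n : ℕ) (hn : 1 ≤ n)
    (R : ℤ) (hR : (R : ℂ) = cyclicResultantC n f) (hR0 : R ≠ 0) :
    0 < R ↔ (Even n ∧ 0 < f.eval 1 * f.eval (-1)) ∨ (Odd n ∧ 0 < f.eval 1) := by
  rw [cyclicResultantC_eq_mul_normSq f (by omega)] at hR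
  set A : ℤ := f.eval 1 * if Even n then f.eval (-1) else 1
  set Q := ∏ z ∈ nthRootsFinset n (1 : ℂ) with 0 < z.im, aeval z f
  have hRA : (R : ℝ) = A * normSq Q := ofReal_injective (by push_cast; exact hR)
  have hQ : 0 < normSq Q := normSq_pos.2 fun hQ => hR0 (by simpa [hQ] using hRA)
  have hsign : 0 < R ↔ 0 < A := by
    rw [← Int.cast_pos (R := ℝ), hRA, mul_pos_iff_of_pos_right hQ, Int.cast_pos]
  rw [hsign]
  rcases Nat.even_or_odd n with he | ho
  · simp [A, he, Nat.not_odd_iff_even.2 he]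
  · simp [A, ho, Nat.not_even_iff_odd.2 ho]

/-- For nonzero `f ∈ ℤ[t]` and `n ≥ 1` with `Res(t^n − 1, f(t)) ≠ 0`, the
cyclic resultant is positive iff either `n` is even and `f(1)·f(−1) > 0`, or `n` is odd and
`f(1) > 0`. -/
theorem cyclic_resultant_pos_iff
    (f : Polynomial ℤ) (hf : f ≠ 0) (n : ℕ) (hn : 1 ≤ n)
    (R : ℤ) (hR : (R : ℂ) = cyclicResultantC n f) (hR0 : R ≠ 0) :
    0 < R ↔ (Even n ∧ 0 < f.eval 1 * f.eval (-1)) ∨ (Odd n ∧ 0 < f.eval 1) :=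
  cyclic_resultant_pos_iff_general f n hn R hR hR0
end

section
/- Let p be a prime number, f a nonzero polynomial with integer coefficients, and n ≥ 1 an integer with Res(t^{p^n} − 1, f(t)) ≠ 0. If p is odd, then Res(t^{p^n} − 1, f(t)) > 0 if and only if f(1) > 0. If p = 2, then Res(t^{2^n} − 1, f(t)) > 0 if and only if f(1)·f(−1) > 0. -/
open Polynomial Finset

private lemma aeval_conj' (f : Polynomial ℤ) (z : ℂ) :
    Polynomial.aeval ((starRingEnd ℂ) z) f = (starRingEnd ℂ) (Polynomial.aeval z f) := by
  rw [Polynomial.aeval_def, Polynomial.aeval_def, Polynomial.hom_eval₂]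
  congr 1
  ext n
  simp

private lemma prod_conj_pairs_pos (f : Polynomial ℤ) (s : Finset ℂ)
    (hconj : ∀ z ∈ s, (starRingEnd ℂ) z ∈ s)
    (hfix : ∀ z ∈ s, (starRingEnd ℂ) z ≠ z)
    (hne : ∀ z ∈ s, Polynomial.aeval z f ≠ 0) :
    ∃ c : ℝ, 0 < c ∧ ∏ z ∈ s, Polynomial.aeval z f = (c : ℂ) := by
  refine ⟨∏ z ∈ s, ‖Polynomial.aeval z f‖,
    Finset.prod_pos (fun z hz => norm_pos_iff.mpr (hne z hz)), ?_⟩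
  have h1 : ∏ z ∈ s, (Polynomial.aeval z f / (‖Polynomial.aeval z f‖ : ℂ)) = 1 := by
    refine Finset.prod_involution (fun z _ => (starRingEnd ℂ) z) ?_ (fun z hz _ => hfix z hz)
      hconj (fun z _ => Complex.conj_conj z)
    intro z hz
    have h0 : Polynomial.aeval z f ≠ 0 := hne z hz
    rw [aeval_conj', Complex.norm_conj, div_mul_div_comm, Complex.mul_conj, ← Complex.sq_norm]
    rw [← Complex.ofReal_mul, ← sq]
    rw [div_self]
    · exact Complex.ofReal_ne_zero.2 (pow_ne_zero 2 (norm_ne_zero_iff.mpr h0))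
  calc ∏ z ∈ s, Polynomial.aeval z f
      = ∏ z ∈ s, ((‖Polynomial.aeval z f‖ : ℂ) *
          (Polynomial.aeval z f / (‖Polynomial.aeval z f‖ : ℂ))) := by
        refine Finset.prod_congr rfl fun z hz => ?_
        rw [mul_div_cancel₀]
        simpa using hne z hz
    _ = (∏ z ∈ s, (‖Polynomial.aeval z f‖ : ℂ)) * 1 := by
        rw [Finset.prod_mul_distrib, h1]
    _ = _ := by rw [mul_one]; push_cast; rfl

/-- For a prime `p`, nonzero `f ∈ ℤ[t]`, and `n ≥ 1` with
`Res(t^{p^n} − 1, f(t)) ≠ 0`: if `p` is odd then the resultant is positive iff `f(1) > 0`,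
and if `p = 2` then it is positive iff `f(1)·f(−1) > 0`. -/
theorem p_power_cyclic_resultant_pos_iff
    (p : ℕ) (hp : p.Prime) (f : Polynomial ℤ) (hf : f ≠ 0) (n : ℕ) (hn : 1 ≤ n)
    (R : ℤ) (hR : (R : ℂ) = cyclicResultantC (p ^ n) f) (hR0 : R ≠ 0) :
    (p ≠ 2 → (0 < R ↔ 0 < f.eval 1)) ∧
    (p = 2 → (0 < R ↔ 0 < f.eval 1 * f.eval (-1))) := by
  classical
  set N := p ^ n with hNdef
  have hN : 0 < N := pow_pos hp.pos n
  have hprim := Complex.isPrimitiveRoot_exp N hN.ne'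
  have hnodup : (nthRoots N (1 : ℂ)).Nodup := hprim.nthRoots_one_nodup
  set S : Finset ℂ := (nthRoots N (1 : ℂ)).toFinset with hSdef
  have hSval : S.1 = nthRoots N (1 : ℂ) := Multiset.dedup_eq_self.2 hnodup
  have hmem : ∀ z : ℂ, z ∈ S ↔ z ^ N = 1 := by
    intro z
    rw [hSdef, Multiset.mem_toFinset, mem_nthRoots hN]
  have hprod : (R : ℂ) = ∏ z ∈ S, Polynomial.aeval z f := by
    rw [hR, cyclicResultantC, Finset.prod_eq_multiset_prod, hSval]
  have hne : ∀ z ∈ S, Polynomial.aeval z f ≠ 0 := by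
    intro z hz h0
    exact hR0 (Int.cast_injective (α := ℂ) (by
      rw [hprod, Finset.prod_eq_zero hz h0, Int.cast_zero]))
  have h1S : (1 : ℂ) ∈ S := (hmem 1).2 (one_pow N)
  have heval1 : Polynomial.aeval (1 : ℂ) f = ((f.eval 1 : ℤ) : ℂ) := by
    simpa using aeval_algebraMap_apply_eq_algebraMap_eval (A := ℂ) (1 : ℤ) f
  have hconjS : ∀ z ∈ S, (starRingEnd ℂ) z ∈ S := by
    intro z hz
    rw [hmem] at hz ⊢
    rw [← map_pow, hz, map_one]
  have hreal : ∀ z : ℂ, z ∈ S → (starRingEnd ℂ) z = z → z = 1 ∨ (z = -1 ∧ Even N) := by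
    intro z hz hc
    have hre : ((z.re : ℝ) : ℂ) = z := Complex.conj_eq_iff_re.1 hc
    have hzN : ((z.re ^ N : ℝ) : ℂ) = ((1 : ℝ) : ℂ) := by
      push_cast
      rw [hre]
      exact (hmem z).1 hz
    have : z.re ^ N = 1 := Complex.ofReal_inj.1 hzN
    rcases (pow_eq_one_iff_of_ne_zero hN.ne').1 this with h | ⟨h, hev⟩
    · left; rw [← hre, h, Complex.ofReal_one]
    · right; refine ⟨?_, hev⟩; rw [← hre, h]; push_cast; ring
  constructor
  · -- p odd
    intro hp2
    have hNodd : Odd N := (hp.odd_of_ne_two hp2).pow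
    set s : Finset ℂ := S.erase 1 with hsdef
    obtain ⟨c, hc, hcprod⟩ := prod_conj_pairs_pos f s
      (by
        intro z hz
        rw [hsdef, Finset.mem_erase] at hz ⊢
        refine ⟨fun h => hz.1 ?_, hconjS z hz.2⟩
        have := congrArg (starRingEnd ℂ) h
        simpa [eq_comm] using this)
      (by
        intro z hz hc'
        rw [hsdef, Finset.mem_erase] at hz
        rcases hreal z hz.2 hc' with h | ⟨h, hev⟩
        · exact hz.1 h
        · exact (Nat.not_even_iff_odd.2 hNodd) hev)
      (fun z hz => hne z (Finset.mem_of_mem_erase hz))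
    have key : ((R : ℝ) : ℂ) = ((((f.eval 1 : ℤ) : ℝ) * c : ℝ) : ℂ) := by
      push_cast
      rw [hprod, ← Finset.mul_prod_erase S _ h1S, ← hsdef, hcprod, heval1]
      try push_cast
      try ring
    have keyR : (R : ℝ) = ((f.eval 1 : ℤ) : ℝ) * c := Complex.ofReal_inj.1 key
    have hcast : 0 < R ↔ (0:ℝ) < (R:ℝ) := by exact_mod_cast Iff.rfl
    rw [hcast, keyR, mul_pos_iff_of_pos_right hc]
    exact_mod_cast Iff.rfl
  · -- p = 2
    intro hp2
    subst hp2
    have hNeven : Even N := by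
      rw [hNdef]
      exact (Nat.even_pow.2 ⟨even_two, by omega⟩)
    have hm1S : (-1 : ℂ) ∈ S := (hmem _).2 (hNeven.neg_one_pow)
    have hm1e : (-1 : ℂ) ∈ S.erase 1 := Finset.mem_erase.2 ⟨by norm_num, hm1S⟩
    have hevalm1 : Polynomial.aeval (-1 : ℂ) f = ((f.eval (-1) : ℤ) : ℂ) := by
      simpa using aeval_algebraMap_apply_eq_algebraMap_eval (A := ℂ) (-1 : ℤ) f
    set s : Finset ℂ := (S.erase 1).erase (-1) with hsdef
    obtain ⟨c, hc, hcprod⟩ := prod_conj_pairs_pos f s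
      (by
        intro z hz
        rw [hsdef, Finset.mem_erase, Finset.mem_erase] at hz ⊢
        refine ⟨fun h => hz.1 ?_, fun h => hz.2.1 ?_, hconjS z hz.2.2⟩
        · have := congrArg (starRingEnd ℂ) h
          simpa [eq_comm] using this
        · have := congrArg (starRingEnd ℂ) h
          simpa [eq_comm] using this)
      (by
        intro z hz hc'
        rw [hsdef, Finset.mem_erase, Finset.mem_erase] at hz
        rcases hreal z hz.2.2 hc' with h | ⟨h, _⟩
        · exact hz.2.1 h
        · exact hz.1 h)
      (fun z hz => hne z (Finset.mem_of_mem_erase (Finset.mem_of_mem_erase hz)))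
    have key : ((R : ℝ) : ℂ) = ((((f.eval 1 * f.eval (-1) : ℤ) : ℝ) * c : ℝ) : ℂ) := by
      push_cast
      rw [hprod, ← Finset.mul_prod_erase S _ h1S, ← Finset.mul_prod_erase _ _ hm1e, ← hsdef,
        hcprod, heval1, hevalm1]
      try push_cast
      try ring
    have keyR : (R : ℝ) = ((f.eval 1 * f.eval (-1) : ℤ) : ℝ) * c := Complex.ofReal_inj.1 key
    have hcast : 0 < R ↔ (0:ℝ) < (R:ℝ) := by exact_mod_cast Iff.rfl
    rw [hcast, keyR, mul_pos_iff_of_pos_right hc]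
    exact_mod_cast Iff.rfl
end

section
/- Let p be a prime number and let α ∈ ℤ_p satisfy ‖α − 1‖_p < 1. Then the sequence ((α^{p^n} − 1)/p^n)_{n≥0} converges in the field ℚ_p of p-adic numbers (its limit is the p-adic logarithm log α). -/
open Filter Topology

private lemma inv_le_norm_natCast (p : ℕ) [hp : Fact p.Prime] (m : ℕ) (hm : m ≠ 0) :
    ((m : ℝ))⁻¹ ≤ ‖(m : ℚ_[p])‖ := by
  have h1 : ((m : ℚ_[p])) = ((m : ℚ) : ℚ_[p]) := by norm_cast
  have hq : (m : ℚ) ≠ 0 := by exact_mod_cast hm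
  have h2 : padicNorm p (m : ℚ) = (p : ℚ) ^ (-(padicValNat p m : ℤ)) := by
    simp [padicNorm, hq, padicValRat.of_nat]
  rw [h1, Padic.eq_padicNorm, h2]
  have hdvd : p ^ padicValNat p m ∣ m := pow_padicValNat_dvd
  have hle : (p : ℝ) ^ (padicValNat p m) ≤ m := by
    exact_mod_cast Nat.le_of_dvd (Nat.pos_of_ne_zero hm) hdvd
  rw [Rat.cast_zpow, Rat.cast_natCast, zpow_neg, zpow_natCast]
  have hp0 : (0 : ℝ) < p := by exact_mod_cast hp.out.pos
  exact inv_anti₀ (pow_pos hp0 _) hle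

/-- For a prime `p` and `α ∈ ℤ_p` with `‖α − 1‖_p < 1`, the sequence
`(α^{p^n} − 1)/p^n` converges in `ℚ_p`; its limit is the `p`-adic logarithm
`log α = ∑_{k≥1} (−1)^{k−1} (α−1)^k / k`. -/
theorem tendsto_pow_p_pow_sub_one_div_p_pow
    (p : ℕ) [hp : Fact p.Prime] (α : ℤ_[p]) (h : ‖α - 1‖ < 1) :
    ∃ L : ℚ_[p],
      Tendsto (fun n => ((α ^ (p ^ n) - 1 : ℤ_[p]) : ℚ_[p]) / (p : ℚ_[p]) ^ n) atTop (𝓝 L) ∧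
      L = ∑' k : ℕ, (-1) ^ k * ((α - 1 : ℤ_[p]) : ℚ_[p]) ^ (k + 1) / (k + 1) := by
  set x : ℚ_[p] := ((α - 1 : ℤ_[p]) : ℚ_[p]) with hxdef
  have hxn : ‖x‖ < 1 := by rwa [hxdef, PadicInt.padic_norm_e_of_padicInt]
  have hppos : ∀ n : ℕ, 0 < p ^ n := fun n => Nat.pow_pos hp.out.pos
  have hksucc_ne : ∀ k : ℕ, ((k : ℚ_[p]) + 1) ≠ 0 := by
    intro k
    have : ((k + 1 : ℕ) : ℚ_[p]) ≠ 0 := Nat.cast_ne_zero.mpr k.succ_ne_zero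
    push_cast at this
    exact this
  -- termwise limit of binomial coefficients
  have hchoose : ∀ k : ℕ, Tendsto (fun n => (((p ^ n - 1).choose k : ℕ) : ℚ_[p])) atTop
      (𝓝 ((-1) ^ k)) := by
    intro k
    induction k with
    | zero => simp only [Nat.choose_zero_right, Nat.cast_one, pow_zero]; exact tendsto_const_nhds
    | succ k ih =>
      have key : ∀ n : ℕ, (((p ^ n - 1).choose (k + 1) : ℕ) : ℚ_[p]) =
          (((p ^ n).choose (k + 1) : ℕ) : ℚ_[p]) - (((p ^ n - 1).choose k : ℕ) : ℚ_[p]) := by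
        intro n
        have h2 : (p ^ n).choose (k + 1) = (p ^ n - 1).choose k + (p ^ n - 1).choose (k + 1) := by
          have h3 := Nat.choose_succ_succ (p ^ n - 1) k
          rw [Nat.succ_eq_add_one (p ^ n - 1), Nat.succ_eq_add_one k,
            Nat.sub_add_cancel (hppos n)] at h3
          exact h3
        have := congrArg (fun t : ℕ => (t : ℚ_[p])) h2
        push_cast at this
        linear_combination -this
      have hzero : Tendsto (fun n => (((p ^ n).choose (k + 1) : ℕ) : ℚ_[p])) atTop (𝓝 0) := by
        apply squeeze_zero_norm (a := fun n => ‖((k : ℚ_[p]) + 1)⁻¹‖ * ‖(p : ℚ_[p])‖ ^ n)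
        · intro n
          have hid : (p ^ n) * (p ^ n - 1).choose k = (p ^ n).choose (k + 1) * (k + 1) := by
            have h3 := Nat.add_one_mul_choose_eq (p ^ n - 1) k
            rw [Nat.sub_add_cancel (hppos n)] at h3
            exact h3
          have hidq := congrArg (fun t : ℕ => (t : ℚ_[p])) hid
          push_cast at hidq
          have heq : (((p ^ n).choose (k + 1) : ℕ) : ℚ_[p]) =
              (p : ℚ_[p]) ^ n * (((p ^ n - 1).choose k : ℕ) : ℚ_[p]) * ((k : ℚ_[p]) + 1)⁻¹ := by
            rw [eq_comm, mul_inv_eq_iff_eq_mul₀ (hksucc_ne k)]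
            linear_combination hidq
          rw [heq]
          rw [norm_mul, norm_mul]
          have hc1 : ‖(((p ^ n - 1).choose k : ℕ) : ℚ_[p])‖ ≤ 1 := by
            have := Padic.norm_int_le_one (p := p) ((p ^ n - 1).choose k : ℤ)
            push_cast at this
            exact this
          calc ‖(p : ℚ_[p]) ^ n‖ * ‖(((p ^ n - 1).choose k : ℕ) : ℚ_[p])‖ * ‖((k : ℚ_[p]) + 1)⁻¹‖
              ≤ ‖(p : ℚ_[p]) ^ n‖ * 1 * ‖((k : ℚ_[p]) + 1)⁻¹‖ := by
                gcongr
            _ = ‖((k : ℚ_[p]) + 1)⁻¹‖ * ‖(p : ℚ_[p])‖ ^ n := by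
                rw [norm_pow]; ring
        · rw [show (0 : ℝ) = ‖((k : ℚ_[p]) + 1)⁻¹‖ * 0 by ring]
          exact tendsto_const_nhds.mul
            (tendsto_pow_atTop_nhds_zero_of_lt_one (norm_nonneg _) Padic.norm_p_lt_one)
      have : Tendsto (fun n => (((p ^ n).choose (k + 1) : ℕ) : ℚ_[p]) -
          (((p ^ n - 1).choose k : ℕ) : ℚ_[p])) atTop (𝓝 (0 - (-1) ^ k)) := hzero.sub ih
      simp only [key]
      convert this using 2
      ring
  -- dominated convergence setup
  set f : ℕ → ℕ → ℚ_[p] :=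
    fun n k => (((p ^ n - 1).choose k : ℕ) : ℚ_[p]) * x ^ (k + 1) / (k + 1) with hfdef
  set g : ℕ → ℚ_[p] := fun k => (-1) ^ k * x ^ (k + 1) / (k + 1) with hgdef
  have hsum : Summable (fun k : ℕ => ((k : ℝ) + 1) * ‖x‖ ^ (k + 1)) := by
    have h0 : Summable (fun k : ℕ => (k : ℝ) * ‖x‖ ^ k) := by
      simpa using summable_pow_mul_geometric_of_norm_lt_one (R := ℝ) 1 (by rwa [norm_norm])
    have := (summable_nat_add_iff 1).mpr h0
    simpa using this
  have hbound : ∀ n : ℕ, ∀ k : ℕ, ‖f n k‖ ≤ ((k : ℝ) + 1) * ‖x‖ ^ (k + 1) := by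
    intro n k
    have hinv : ‖((k : ℚ_[p]) + 1)⁻¹‖ ≤ (k : ℝ) + 1 := by
      have h1 : (((k + 1 : ℕ) : ℝ))⁻¹ ≤ ‖((k + 1 : ℕ) : ℚ_[p])‖ :=
        inv_le_norm_natCast p (k + 1) k.succ_ne_zero
      push_cast at h1
      rw [norm_inv]
      calc ‖(k : ℚ_[p]) + 1‖⁻¹ ≤ (((k : ℝ) + 1)⁻¹)⁻¹ :=
            inv_anti₀ (by positivity) h1
        _ = (k : ℝ) + 1 := inv_inv _
    have hc1 : ‖(((p ^ n - 1).choose k : ℕ) : ℚ_[p])‖ ≤ 1 := by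
      have := Padic.norm_int_le_one (p := p) ((p ^ n - 1).choose k : ℤ)
      push_cast at this
      exact this
    have : ‖f n k‖ = ‖(((p ^ n - 1).choose k : ℕ) : ℚ_[p])‖ * ‖x‖ ^ (k + 1) *
        ‖((k : ℚ_[p]) + 1)⁻¹‖ := by
      rw [hfdef]
      simp only [div_eq_mul_inv, norm_mul, norm_pow]
    rw [this]
    calc ‖(((p ^ n - 1).choose k : ℕ) : ℚ_[p])‖ * ‖x‖ ^ (k + 1) * ‖((k : ℚ_[p]) + 1)⁻¹‖
        ≤ 1 * ‖x‖ ^ (k + 1) * ((k : ℝ) + 1) := by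
          gcongr
      _ = ((k : ℝ) + 1) * ‖x‖ ^ (k + 1) := by ring
  have htend : Tendsto (fun n => ∑' k, f n k) atTop (𝓝 (∑' k, g k)) := by
    apply tendsto_tsum_of_dominated_convergence hsum
    · intro k
      have : Tendsto (fun n => (((p ^ n - 1).choose k : ℕ) : ℚ_[p]) * (x ^ (k + 1) / (k + 1)))
          atTop (𝓝 ((-1) ^ k * (x ^ (k + 1) / (k + 1)))) := (hchoose k).mul_const _
      simp only [hfdef, hgdef, mul_div_assoc] at this ⊢
      exact this
    · exact Eventually.of_forall hbound
  -- the partial expression equals the tsum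
  have hkey : ∀ n : ℕ, ((α ^ (p ^ n) - 1 : ℤ_[p]) : ℚ_[p]) / (p : ℚ_[p]) ^ n = ∑' k, f n k := by
    intro n
    have hmne : ((p ^ n : ℕ) : ℚ_[p]) ≠ 0 :=
      Nat.cast_ne_zero.mpr (hppos n).ne'
    have hfin : ∀ k ∉ Finset.range (p ^ n), f n k = 0 := by
      intro k hk
      rw [Finset.mem_range, not_lt] at hk
      have : (p ^ n - 1).choose k = 0 := Nat.choose_eq_zero_of_lt (by have := hppos n; omega)
      simp [hfdef, this]
    rw [tsum_eq_sum hfin]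
    have hαx : (α : ℚ_[p]) = 1 + x := by rw [hxdef]; push_cast; ring
    have hcast : ((α ^ (p ^ n) - 1 : ℤ_[p]) : ℚ_[p]) = (1 + x) ^ (p ^ n) - 1 := by
      push_cast [hαx]; ring
    have hppow : (p : ℚ_[p]) ^ n = ((p ^ n : ℕ) : ℚ_[p]) := by push_cast; ring
    rw [hcast, hppow]
    rw [div_eq_iff hmne]
    have hsum_eq : (∑ k ∈ Finset.range (p ^ n), f n k) * ((p ^ n : ℕ) : ℚ_[p]) =
        ∑ k ∈ Finset.range (p ^ n), (((p ^ n).choose (k + 1) : ℕ) : ℚ_[p]) * x ^ (k + 1) := by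
      rw [Finset.sum_mul]
      apply Finset.sum_congr rfl
      intro k _
      have hid : (p ^ n) * (p ^ n - 1).choose k = (p ^ n).choose (k + 1) * (k + 1) := by
        have h3 := Nat.add_one_mul_choose_eq (p ^ n - 1) k
        rw [Nat.sub_add_cancel (hppos n)] at h3
        exact h3
      have hidq := congrArg (fun t : ℕ => (t : ℚ_[p])) hid
      push_cast at hidq
      show (((p ^ n - 1).choose k : ℕ) : ℚ_[p]) * x ^ (k + 1) / ((k : ℚ_[p]) + 1) *
          ((p ^ n : ℕ) : ℚ_[p]) = (((p ^ n).choose (k + 1) : ℕ) : ℚ_[p]) * x ^ (k + 1)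
      rw [div_mul_eq_mul_div, div_eq_iff (hksucc_ne k)]
      push_cast
      linear_combination x ^ (k + 1) * hidq
    rw [hsum_eq]
    have hbinom : (1 + x) ^ (p ^ n) =
        ∑ k ∈ Finset.range (p ^ n + 1), x ^ k * ((p ^ n).choose k : ℚ_[p]) := by
      rw [add_comm 1 x, add_pow]
      apply Finset.sum_congr rfl
      intro k _
      simp
    rw [hbinom, Finset.sum_range_succ']
    simp only [pow_zero, Nat.choose_zero_right, Nat.cast_one, one_mul]
    rw [add_sub_cancel_right]
    apply Finset.sum_congr rfl
    intro k _
    ring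
  refine ⟨∑' k, g k, ?_, ?_⟩
  · exact htend.congr (fun n => (hkey n).symm)
  · rfl
end

section
/- Let p be a prime number and let α ∈ ℤ_p satisfy ‖α − 1‖_p < p^{−1/(p−1)}. Then the limit L = lim_{n→∞} (α^{p^n} − 1)/p^n exists in ℚ_p and satisfies ‖L‖_p = ‖α − 1‖_p. -/
open Filter Topology Finset

lemma binom_est (p : ℕ) [hp : Fact p.Prime] (y : ℚ_[p]) (hy : ‖y‖ ≤ 1) :
    ‖(1 + y) ^ p - 1 - p * y‖ ≤ max ((p : ℝ)⁻¹ * ‖y‖ ^ 2) (‖y‖ ^ p) := by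
  have hp2 : 2 ≤ p := hp.out.two_le
  have hid : (1 + y) ^ p - 1 - p * y
      = ∑ k ∈ Finset.Ico 2 (p + 1), y ^ k * (1:ℚ_[p]) ^ (p - k) * (p.choose k : ℚ_[p]) := by
    rw [add_comm 1 y, add_pow, Finset.range_eq_Ico,
      Finset.sum_eq_sum_Ico_succ_bot (by omega : 0 < p + 1),
      Finset.sum_eq_sum_Ico_succ_bot (by omega : 1 < p + 1)]
    simp [Nat.choose_one_right]
    ring
  rw [hid]
  apply IsUltrametricDist.norm_sum_le_of_forall_le_of_nonneg
  · positivity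
  · intro k hk
    simp only [Finset.mem_Ico] at hk
    rw [one_pow, mul_one, norm_mul, norm_pow]
    rcases eq_or_lt_of_le (Nat.lt_succ_iff.mp hk.2) with hkp | hkp
    · subst hkp
      simp only [Nat.choose_self, Nat.cast_one, norm_one, mul_one]
      exact le_max_right _ _
    · refine le_max_of_le_left ?_
      have hdvd : p ∣ p.choose k := hp.out.dvd_choose_self (by omega) hkp
      obtain ⟨m, hm⟩ := hdvd
      have hnormC : ‖(p.choose k : ℚ_[p])‖ ≤ (p : ℝ)⁻¹ := by
        rw [hm]
        push_cast
        rw [norm_mul, Padic.norm_p]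
        calc (p:ℝ)⁻¹ * ‖(m : ℚ_[p])‖ ≤ (p:ℝ)⁻¹ * 1 := by
              gcongr
              exact_mod_cast Padic.norm_int_le_one (m : ℤ)
          _ = (p:ℝ)⁻¹ := mul_one _
      calc ‖y‖ ^ k * ‖(p.choose k : ℚ_[p])‖
          ≤ ‖y‖ ^ 2 * (p:ℝ)⁻¹ :=
            mul_le_mul (pow_le_pow_of_le_one (norm_nonneg y) hy hk.1) hnormC
              (norm_nonneg _) (by positivity)
        _ = (p:ℝ)⁻¹ * ‖y‖ ^ 2 := mul_comm _ _

/-- For a prime `p` and `α ∈ ℤ_p` with `‖α − 1‖_p < p^{−1/(p−1)}`, the limit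
`L = lim_n (α^{p^n} − 1)/p^n` exists in `ℚ_p` and satisfies `‖L‖_p = ‖α − 1‖_p`
(i.e. `‖log α‖_p = ‖1 − α‖_p`). -/
theorem norm_limit_eq_norm_sub_one
    (p : ℕ) [hp : Fact p.Prime] (α : ℤ_[p])
    (h : ‖α - 1‖ < (p : ℝ) ^ (-(1 : ℝ) / (p - 1))) :
    ∃ L : ℚ_[p],
      Tendsto (fun n => ((α ^ (p ^ n) - 1 : ℤ_[p]) : ℚ_[p]) / (p : ℚ_[p]) ^ n) atTop (𝓝 L) ∧
      ‖L‖ = ‖α - 1‖ := by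
  by_cases h0 : α = 1
  · refine ⟨0, ?_, by simp [h0]⟩
    have : (fun n => ((α ^ (p ^ n) - 1 : ℤ_[p]) : ℚ_[p]) / (p : ℚ_[p]) ^ n)
        = fun _ => (0 : ℚ_[p]) := by
      funext n; simp [h0]
    rw [this]
    exact tendsto_const_nhds
  -- setup
  have hp2 : 2 ≤ p := hp.out.two_le
  have hp1 : (1:ℝ) < p := by exact_mod_cast hp.out.one_lt
  have hp0 : (0:ℝ) < p := lt_trans one_pos hp1
  have hpq : (p : ℚ_[p]) ≠ 0 := by exact_mod_cast hp.out.ne_zero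
  set q : ℝ := (p:ℝ)⁻¹ with hq
  have hq0 : 0 < q := by positivity
  have hq1 : q < 1 := inv_lt_one_of_one_lt₀ hp1
  have hpq1 : (p:ℝ) * q = 1 := mul_inv_cancel₀ (ne_of_gt hp0)
  set r : ℝ := ‖α - 1‖ with hrdef
  have hr0 : 0 < r := by
    rw [hrdef, norm_pos_iff]
    exact sub_ne_zero_of_ne h0
  have hr1 : r ≤ 1 := PadicInt.norm_le_one _
  -- consequences of the hypothesis
  have hexp_pos : (0:ℝ) < (p:ℝ) - 1 := by linarith
  have hrlt1 : r < 1 := by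
    refine lt_of_lt_of_le h (Real.rpow_le_one_of_one_le_of_nonpos (le_of_lt hp1) ?_)
    exact div_nonpos_of_nonpos_of_nonneg (by norm_num) (le_of_lt hexp_pos)
  have hkey : r ^ (p - 1) < q := by
    have hcast : ((p - 1 : ℕ) : ℝ) = (p:ℝ) - 1 := by
      have : (1:ℕ) ≤ p := hp.out.one_le
      push_cast [this]
      ring
    have h1 : r ^ (p - 1) < ((p:ℝ) ^ (-(1:ℝ) / ((p:ℝ) - 1))) ^ (p - 1) :=
      pow_lt_pow_left₀ h (norm_nonneg _) (by omega)
    refine lt_of_lt_of_le h1 (le_of_eq ?_)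
    rw [← Real.rpow_natCast ((p:ℝ) ^ (-(1:ℝ) / ((p:ℝ) - 1))) (p - 1),
      ← Real.rpow_mul (le_of_lt hp0), hcast]
    rw [div_mul_cancel₀ _ (ne_of_gt hexp_pos), Real.rpow_neg_one]
  have hkey' : (p:ℝ) * r ^ (p - 1) < 1 := by
    calc (p:ℝ) * r ^ (p - 1) < (p:ℝ) * q := by gcongr
      _ = 1 := hpq1
  -- the sequence
  set f : ℕ → ℚ_[p] := fun n => ((α ^ (p ^ n) - 1 : ℤ_[p]) : ℚ_[p]) / (p : ℚ_[p]) ^ n with hf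
  have hfval : ∀ n, f n = ((α : ℚ_[p]) ^ (p ^ n) - 1) / (p : ℚ_[p]) ^ n := by
    intro n; rw [hf]; push_cast; ring_nf
  have hcast_norm : ∀ n : ℕ, ‖(α : ℚ_[p]) ^ (p ^ n) - 1‖ = ‖α ^ (p ^ n) - 1‖ := by
    intro n
    have : (α : ℚ_[p]) ^ (p ^ n) - 1 = ((α ^ (p ^ n) - 1 : ℤ_[p]) : ℚ_[p]) := by push_cast; ring
    rw [this, PadicInt.padic_norm_e_of_padicInt]
  -- main induction on the norm of α^(p^n) - 1
  have hA : ∀ n : ℕ, ‖(α : ℚ_[p]) ^ (p ^ n) - 1‖ ≤ q ^ n * r := by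
    intro n
    induction n with
    | zero =>
      have h00 := hcast_norm 0
      simp only [pow_zero, pow_one] at h00 ⊢
      rw [one_mul, h00]
    | succ n ih =>
      set y : ℚ_[p] := (α : ℚ_[p]) ^ (p ^ n) - 1 with hy
      have hy1 : ‖y‖ ≤ 1 := by
        rw [hy, hcast_norm n]; exact PadicInt.norm_le_one _
      have hyr : ‖y‖ ≤ r := le_trans ih (by
        calc q ^ n * r ≤ 1 * r := by
              gcongr
              exact pow_le_one₀ (le_of_lt hq0) (le_of_lt hq1)
          _ = r := one_mul r)
      have hstep : (α : ℚ_[p]) ^ (p ^ (n+1)) - 1 = (1 + y) ^ p - 1 := by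
        rw [hy, pow_succ, pow_mul]; ring
      rw [hstep]
      have hsplit : (1 + y) ^ p - 1 = (p : ℚ_[p]) * y + ((1 + y) ^ p - 1 - p * y) := by ring
      rw [hsplit]
      refine le_trans (Padic.nonarchimedean _ _) (max_le ?_ ?_)
      · rw [norm_mul, Padic.norm_p]
        calc (p:ℝ)⁻¹ * ‖y‖ ≤ q * (q ^ n * r) := by rw [← hq]; gcongr
          _ = q ^ (n+1) * r := by ring
      · refine le_trans (binom_est p y hy1) (max_le ?_ ?_)
        · calc (p:ℝ)⁻¹ * ‖y‖ ^ 2 ≤ q * (‖y‖ * 1) := by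
                rw [← hq, sq]
                gcongr
            _ = q * ‖y‖ := by ring
            _ ≤ q * (q ^ n * r) := by gcongr
            _ = q ^ (n+1) * r := by ring
        · have hpow : ‖y‖ ^ p = ‖y‖ ^ (p - 1) * ‖y‖ := by
            rw [← pow_succ]
            congr 1
            omega
          calc ‖y‖ ^ p = ‖y‖ ^ (p - 1) * ‖y‖ := hpow
            _ ≤ r ^ (p - 1) * ‖y‖ := by gcongr
            _ ≤ q * ‖y‖ := by gcongr
            _ ≤ q * (q ^ n * r) := by gcongr
            _ = q ^ (n+1) * r := by ring
  -- bound on consecutive differences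
  set c : ℝ := max r ((p:ℝ) * r ^ (p - 1)) with hc
  have hc0 : 0 < c := lt_max_of_lt_left hr0
  have hc1 : c < 1 := max_lt hrlt1 hkey'
  have hdiff : ∀ n : ℕ, ‖f (n+1) - f n‖ ≤ (c * r) * q ^ n := by
    intro n
    set y : ℚ_[p] := (α : ℚ_[p]) ^ (p ^ n) - 1 with hy
    have hy1 : ‖y‖ ≤ 1 := by rw [hy, hcast_norm n]; exact PadicInt.norm_le_one _
    have hyb : ‖y‖ ≤ q ^ n * r := hA n
    have hstep : (α : ℚ_[p]) ^ (p ^ (n+1)) = (1 + y) ^ p := by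
      rw [hy, pow_succ, pow_mul]; ring
    have hfd : f (n+1) - f n = ((1 + y) ^ p - 1 - p * y) / (p : ℚ_[p]) ^ (n+1) := by
      rw [hfval (n+1), hfval n, hstep, hy]
      field_simp
      ring
    have hnormden : ‖(p : ℚ_[p]) ^ (n+1)‖ = q ^ (n+1) := by
      rw [norm_pow, Padic.norm_p, hq]
    have hE : ‖(1 + y) ^ p - 1 - p * y‖ ≤ (c * r) * q ^ (2 * n + 1) := by
      refine le_trans (binom_est p y hy1) (max_le ?_ ?_)
      · calc (p:ℝ)⁻¹ * ‖y‖ ^ 2 ≤ q * (q ^ n * r) ^ 2 := by rw [← hq]; gcongr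
          _ = (r * r) * q ^ (2 * n + 1) := by ring
          _ ≤ (c * r) * q ^ (2 * n + 1) := by gcongr; exact le_max_left _ _
      · calc ‖y‖ ^ p ≤ (q ^ n * r) ^ p := by gcongr
          _ = q ^ (n * p) * r ^ p := by rw [mul_pow, ← pow_mul]
          _ ≤ q ^ (2 * n) * r ^ p :=
              mul_le_mul_of_nonneg_right
                (pow_le_pow_of_le_one (le_of_lt hq0) (le_of_lt hq1) (by nlinarith))
                (by positivity)
          _ = q ^ (2 * n) * (r ^ (p - 1) * r) := by
              congr 1
              rw [← pow_succ]; congr 1; omega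
          _ = ((p:ℝ) * q) * (r ^ (p - 1) * r * q ^ (2 * n)) := by rw [hpq1]; ring
          _ = ((p:ℝ) * r ^ (p - 1)) * r * q ^ (2 * n + 1) := by ring
          _ ≤ (c * r) * q ^ (2 * n + 1) := by
              gcongr
              exact le_max_right _ _
    rw [hfd, norm_div, hnormden]
    rw [div_le_iff₀ (by positivity)]
    calc ‖(1 + y) ^ p - 1 - p * y‖ ≤ (c * r) * q ^ (2 * n + 1) := hE
      _ = (c * r) * q ^ n * q ^ (n + 1) := by ring
  -- Cauchy, hence convergent
  have hcauchy : CauchySeq f := by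
    apply cauchySeq_of_le_geometric q (c * r) hq1
    intro n
    rw [dist_eq_norm, norm_sub_rev]
    exact hdiff n
  obtain ⟨L, hL⟩ := cauchySeq_tendsto_of_complete hcauchy
  refine ⟨L, hL, ?_⟩
  -- norm of f 0
  have hf0 : ‖f 0‖ = r := by
    have : f 0 = ((α - 1 : ℤ_[p]) : ℚ_[p]) := by
      rw [hf]; simp
    rw [this, PadicInt.padic_norm_e_of_padicInt, hrdef]
  -- all terms stay within c*r of f 0
  have hfn : ∀ n : ℕ, ‖f n - f 0‖ ≤ c * r := by
    intro n
    induction n with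
    | zero => simp; positivity
    | succ n ih =>
      have : f (n+1) - f 0 = (f (n+1) - f n) + (f n - f 0) := by ring
      rw [this]
      refine le_trans (Padic.nonarchimedean _ _) (max_le ?_ ih)
      calc ‖f (n+1) - f n‖ ≤ (c * r) * q ^ n := hdiff n
        _ ≤ (c * r) * 1 := by
            gcongr
            exact pow_le_one₀ (le_of_lt hq0) (le_of_lt hq1)
        _ = c * r := mul_one _
  have hLf0 : ‖L - f 0‖ ≤ c * r := by
    have htd : Tendsto (fun n => ‖f n - f 0‖) atTop (𝓝 ‖L - f 0‖) :=
      ((hL.sub tendsto_const_nhds).norm)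
    exact le_of_tendsto htd (Eventually.of_forall hfn)
  have hlt : ‖L - f 0‖ < ‖f 0‖ := by
    rw [hf0]
    calc ‖L - f 0‖ ≤ c * r := hLf0
      _ < 1 * r := by gcongr
      _ = r := one_mul r
  have : ‖L‖ = ‖f 0‖ := by
    have hLeq : L = f 0 + (L - f 0) := by ring
    rw [hLeq, Padic.add_eq_max_of_ne (ne_of_gt hlt), max_eq_left (le_of_lt hlt)]
  rw [this, hf0]
end

section
/- Let p be a prime number and let f ∈ ℤ[t] be a nonzero polynomial of degree d whose content is not divisible by p, and suppose f splits over ℚ_p: f(t) = a_0 ∏_{i=1}^{d} (t − α_i) with leading coefficient a_0 and roots α_i ∈ ℚ_p. Then u := a_0 · ∏_{i : ‖α_i‖_p > 1} α_i satisfies ‖u‖_p = 1; let ξ be the unique (p−1)-th root of unity in ℤ_p with ‖u − ξ‖_p < 1, and for each i with ‖α_i‖_p = 1 let ζ_i be the unique (p−1)-th root of unity in ℤ_p with ‖α_i − ζ_i‖_p < 1. Then, in ℤ_p, lim_{n→∞} Res(t^{p^n} − 1, f(t)) = (−1)^{p·d + #{i : ‖α_i‖_p < 1}} · ξ · ∏_{i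 : ‖α_i‖_p = 1} (ζ_i − 1), and this limit is zero if and only if ζ_i = 1 for some i. -/
open Filter Topology Polynomial

section AuxLemmas
variable {p : ℕ} [hp : Fact p.Prime]


lemma aux_norm_le_inv {x : ℚ_[p]} (h : ‖x‖ < 1) : ‖x‖ ≤ (p:ℝ)⁻¹ := by
  have := (Padic.norm_le_pow_iff_norm_lt_pow_add_one x (-1)).mpr (by simpa using h)
  simpa using this

lemma aux_sum_norm_le {ι : Type*} (s : Finset ι) (g : ι → ℚ_[p]) {C : ℝ} (hC : 0 ≤ C)
    (h : ∀ i ∈ s, ‖g i‖ ≤ C) : ‖∑ i ∈ s, g i‖ ≤ C := by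
  classical
  induction s using Finset.induction_on with
  | empty => simpa using hC
  | insert _ _ hx ih =>
    rename_i a s
    rw [Finset.sum_insert hx]
    refine le_trans (Padic.nonarchimedean _ _) (max_le (h a (by simp)) (ih fun i hi => h i (by simp [hi])))

lemma aux_pow_p_sub {x y : ℚ_[p]} (hy : ‖y‖ ≤ 1) (hxy : ‖x - y‖ ≤ (p:ℝ)⁻¹) :
    ‖x ^ p - y ^ p‖ ≤ (p:ℝ)⁻¹ * ‖x - y‖ := by
  have h2p : 2 ≤ p := hp.out.two_le
  have hp1 : (1:ℝ) < p := by exact_mod_cast hp.out.one_lt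
  have hpinv : (p:ℝ)⁻¹ ≤ 1 := by
    rw [inv_le_one_iff₀]; right; linarith
  have hh1 : ‖x - y‖ ≤ 1 := le_trans hxy hpinv
  have key : x ^ p - y ^ p = ∑ k ∈ Finset.range p, y ^ k * (x - y) ^ (p - k) * (p.choose k : ℚ_[p]) := by
    have := add_pow y (x - y) p
    rw [add_sub_cancel] at this
    rw [this, Finset.sum_range_succ]
    simp
  rw [key]
  refine aux_sum_norm_le _ _ (by positivity) ?_
  intro k hk
  rw [Finset.mem_range] at hk
  have hk1 : 1 ≤ p - k := by omega
  have hnormh : ‖(x - y) ^ (p - k)‖ ≤ ‖x - y‖ := by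
    rw [norm_pow]
    calc ‖x - y‖ ^ (p - k) ≤ ‖x - y‖ ^ 1 := pow_le_pow_of_le_one (norm_nonneg _) hh1 hk1
    _ = ‖x - y‖ := pow_one _
  rw [norm_mul, norm_mul, norm_pow]
  rcases Nat.eq_zero_or_pos k with hk0 | hk0
  · subst hk0
    have h2 : 2 ≤ p - 0 := by omega
    have : ‖(x - y) ^ (p - 0)‖ ≤ (p:ℝ)⁻¹ * ‖x - y‖ := by
      rw [norm_pow]
      calc ‖x - y‖ ^ (p - 0) ≤ ‖x - y‖ ^ 2 := pow_le_pow_of_le_one (norm_nonneg _) hh1 h2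
      _ = ‖x - y‖ * ‖x - y‖ := sq ‖x-y‖
      _ ≤ (p:ℝ)⁻¹ * ‖x - y‖ := mul_le_mul_of_nonneg_right hxy (norm_nonneg _)
    simpa using this
  · have hdvd : (p:ℤ) ∣ (p.choose k : ℤ) := by
      exact_mod_cast Int.natCast_dvd_natCast.mpr (hp.out.dvd_choose_self (by omega) hk)
    have hC : ‖(p.choose k : ℚ_[p])‖ ≤ (p:ℝ)⁻¹ := by
      have : ‖((p.choose k : ℤ) : ℚ_[p])‖ < 1 := (Padic.norm_intCast_lt_one_iff).mpr hdvd
      have := aux_norm_le_inv this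
      simpa using this
    calc ‖y‖ ^ k * ‖(x - y) ^ (p - k)‖ * ‖(p.choose k : ℚ_[p])‖
        ≤ 1 * ‖x - y‖ * (p:ℝ)⁻¹ := by
          refine mul_le_mul (mul_le_mul (pow_le_one₀ (norm_nonneg _) hy) hnormh (norm_nonneg _) (by positivity)) hC (norm_nonneg _) (by positivity)
    _ = (p:ℝ)⁻¹ * ‖x - y‖ := by ring




lemma aux_p_le_norm {x : ℚ_[p]} (h : 1 < ‖x‖) : (p:ℝ) ≤ ‖x‖ := by
  have hx0 : x ≠ 0 := by rintro rfl; simp at h; linarith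
  have hp0 : (0:ℝ) < p := by exact_mod_cast hp.out.pos
  have hinv : ‖x⁻¹‖ < 1 := by
    rw [norm_inv]
    rw [inv_lt_one_iff₀]; right; exact h
  have := aux_norm_le_inv hinv
  rw [norm_inv] at this
  have hxpos : (0:ℝ) < ‖x‖ := by positivity
  rw [inv_le_inv₀ hxpos hp0] at this
  exact this

lemma aux_zeta_pow {ζ : ℚ_[p]} (hζ : ζ ^ (p - 1) = 1) (n : ℕ) : ζ ^ (p ^ n) = ζ := by
  have h2p : 2 ≤ p := hp.out.two_le
  have hζp : ζ ^ p = ζ := by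
    have : ζ ^ p = ζ ^ (p - 1) * ζ := by
      rw [← pow_succ]; congr 1; omega
    rw [this, hζ, one_mul]
  induction n with
  | zero => simp
  | succ n ih => rw [pow_succ, pow_mul, ih, hζp]

lemma aux_norm_zeta {ζ : ℚ_[p]} (hζ : ζ ^ (p - 1) = 1) : ‖ζ‖ = 1 := by
  have h2p : 2 ≤ p := hp.out.two_le
  have h1 : ‖ζ‖ ^ (p - 1) = 1 := by rw [← norm_pow, hζ, norm_one]
  rcases (pow_eq_one_iff_cases).mp h1 with h | h | h
  · omega
  · exact h
  · exfalso; obtain ⟨h, _⟩ := h; linarith [norm_nonneg ζ, h]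

lemma aux_tendsto_pow_p_pow {x ζ : ℚ_[p]} (hζ : ζ ^ (p - 1) = 1) (hx : ‖x - ζ‖ < 1) :
    Tendsto (fun n => x ^ (p ^ n)) atTop (𝓝 ζ) := by
  have h2p : 2 ≤ p := hp.out.two_le
  have hp1 : (1:ℝ) < p := by exact_mod_cast hp.out.one_lt
  have hζ1 : ‖ζ‖ = 1 := aux_norm_zeta hζ
  have hxc : ‖x - ζ‖ ≤ (p:ℝ)⁻¹ := aux_norm_le_inv hx
  have hpinv0 : (0:ℝ) ≤ (p:ℝ)⁻¹ := by positivity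
  have hpinv1 : (p:ℝ)⁻¹ < 1 := by
    rw [inv_lt_one_iff₀]; right; exact hp1
  have key : ∀ n, ‖x ^ (p ^ n) - ζ‖ ≤ ((p:ℝ)⁻¹) ^ n * ‖x - ζ‖ := by
    intro n
    induction n with
    | zero => simp
    | succ n ih =>
      have hle : ‖x ^ (p ^ n) - ζ‖ ≤ (p:ℝ)⁻¹ := by
        refine le_trans ih ?_
        calc ((p:ℝ)⁻¹) ^ n * ‖x - ζ‖ ≤ 1 ^ n * (p:ℝ)⁻¹ := by
              refine mul_le_mul (pow_le_pow_left₀ hpinv0 (le_of_lt hpinv1) n) hxc (norm_nonneg _) (by positivity)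
        _ = (p:ℝ)⁻¹ := by simp
      have step := aux_pow_p_sub (x := x ^ (p ^ n)) (y := ζ) (le_of_eq hζ1) hle
      have hz : ζ ^ p = ζ := by
        have := aux_zeta_pow hζ 1; simpa using this
      rw [hz, ← pow_mul, ← pow_succ] at step
      calc ‖x ^ p ^ (n+1) - ζ‖ ≤ (p:ℝ)⁻¹ * ‖x ^ p ^ n - ζ‖ := step
      _ ≤ (p:ℝ)⁻¹ * (((p:ℝ)⁻¹) ^ n * ‖x - ζ‖) := by
            exact mul_le_mul_of_nonneg_left ih hpinv0
      _ = ((p:ℝ)⁻¹) ^ (n+1) * ‖x - ζ‖ := by ring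
  have h0 : Tendsto (fun n => ((p:ℝ)⁻¹) ^ n * ‖x - ζ‖) atTop (𝓝 0) := by
    have := tendsto_pow_atTop_nhds_zero_of_lt_one hpinv0 hpinv1
    simpa using this.mul_const ‖x - ζ‖
  have hnorm0 : Tendsto (fun n => ‖x ^ (p ^ n) - ζ‖) atTop (𝓝 0) :=
    squeeze_zero (fun n => norm_nonneg _) key h0
  rw [tendsto_iff_norm_sub_tendsto_zero]
  exact hnorm0

lemma aux_tendsto_pow_p_zero {x : ℚ_[p]} (hx : ‖x‖ < 1) :
    Tendsto (fun n => x ^ (p ^ n)) atTop (𝓝 0) :=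
  (tendsto_pow_atTop_nhds_zero_of_norm_lt_one hx).comp
    (tendsto_pow_atTop_atTop_of_one_lt hp.out.one_lt)



lemma aux_multiset_norm_prod (B : Multiset ℚ_[p]) : ‖B.prod‖ = (B.map (fun x => ‖x‖)).prod := by
  induction B using Multiset.induction_on with
  | empty => simp
  | cons a B ih => simp [norm_mul, ih]

lemma aux_multiset_prod_nonneg (B : Multiset ℝ) (h : ∀ x ∈ B, 0 ≤ x) : 0 ≤ B.prod := by
  induction B using Multiset.induction_on with
  | empty => simp
  | cons a B ih =>
    rw [Multiset.prod_cons]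
    exact mul_nonneg (h a (by simp)) (ih fun x hx => h x (by simp [hx]))

lemma aux_coeff_bound (B : Multiset ℚ_[p]) (μ : ℝ) (hμ : 1 ≤ μ)
    (h : ∀ x ∈ B, μ ≤ ‖x‖) (j : ℕ) :
    ‖((B.map fun c => X - C c).prod).coeff j‖ * μ ^ j ≤ (B.map (fun x => ‖x‖)).prod := by
  induction B using Multiset.induction_on generalizing j with
  | empty =>
    rcases Nat.eq_zero_or_pos j with rfl | hj
    · simp
    · have : ((0:Multiset ℚ_[p]).map fun c => X - C c).prod = 1 := by simp
      rw [this, Polynomial.coeff_one, if_neg (by omega : ¬ j = 0)]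
      simp
  | cons a B ih =>
    have hprodB : 0 ≤ (B.map (fun x => ‖x‖)).prod :=
      aux_multiset_prod_nonneg _ (by intro x hx; simp at hx; obtain ⟨y, _, rfl⟩ := hx; exact norm_nonneg y)
    have hμ0 : (0:ℝ) < μ := lt_of_lt_of_le one_pos hμ
    have hIH := ih (fun x hx => h x (by simp [hx]))
    have hμa : μ ≤ ‖a‖ := h a (by simp)
    have hcons : ((a ::ₘ B).map fun c => X - C c).prod = (X - C a) * (B.map fun c => X - C c).prod := by
      rw [Multiset.map_cons, Multiset.prod_cons]
    rw [hcons, Multiset.map_cons, Multiset.prod_cons, sub_mul]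
    set P := (B.map fun c => X - C c).prod with hP
    rcases Nat.eq_zero_or_pos j with rfl | hj
    · have : ((X*P - C a * P).coeff 0) = - (a * P.coeff 0) := by
        simp [Polynomial.coeff_sub, Polynomial.mul_coeff_zero, Polynomial.coeff_C_mul]
      rw [this]
      simp only [norm_neg, norm_mul, pow_zero, mul_one]
      have h0 := hIH 0
      simp only [pow_zero, mul_one] at h0
      exact mul_le_mul_of_nonneg_left h0 (norm_nonneg a)
    · obtain ⟨k, rfl⟩ := Nat.exists_eq_add_of_lt hj
      simp only [zero_add]
      have hco : (X*P - C a * P).coeff (k+1) = P.coeff k - a * P.coeff (k+1) := by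
        rw [Polynomial.coeff_sub, Polynomial.coeff_X_mul, Polynomial.coeff_C_mul]
      rw [hco]
      have hmax : ‖P.coeff k - a * P.coeff (k+1)‖ ≤ max ‖P.coeff k‖ (‖a‖ * ‖P.coeff (k+1)‖) := by
        rw [sub_eq_add_neg]
        refine le_trans (Padic.nonarchimedean _ _) ?_
        rw [norm_neg, norm_mul]
      rcases max_le_iff.mp (le_refl (max ‖P.coeff k‖ (‖a‖ * ‖P.coeff (k+1)‖))) with ⟨h1, h2⟩
      have hfinal : max ‖P.coeff k‖ (‖a‖ * ‖P.coeff (k+1)‖) * μ ^ (k+1) ≤ ‖a‖ * (B.map (fun x => ‖x‖)).prod := by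
        rw [max_mul_of_nonneg _ _ (by positivity)]
        refine max_le ?_ ?_
        · calc ‖P.coeff k‖ * μ ^ (k+1) = (‖P.coeff k‖ * μ ^ k) * μ := by ring
          _ ≤ (B.map (fun x => ‖x‖)).prod * ‖a‖ := by
              refine mul_le_mul (hIH k) hμa (le_of_lt hμ0) hprodB
          _ = ‖a‖ * (B.map (fun x => ‖x‖)).prod := by ring
        · calc ‖a‖ * ‖P.coeff (k+1)‖ * μ ^ (k+1) = ‖a‖ * (‖P.coeff (k+1)‖ * μ ^ (k+1)) := by ring
          _ ≤ ‖a‖ * (B.map (fun x => ‖x‖)).prod := mul_le_mul_of_nonneg_left (hIH (k+1)) (norm_nonneg a)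
      calc ‖P.coeff k - a * P.coeff (k+1)‖ * μ ^ (k+1)
          ≤ max ‖P.coeff k‖ (‖a‖ * ‖P.coeff (k+1)‖) * μ ^ (k+1) :=
            mul_le_mul_of_nonneg_right hmax (by positivity)
      _ ≤ ‖a‖ * (B.map (fun x => ‖x‖)).prod := hfinal



lemma aux_nthRoots_card (n : ℕ) : Multiset.card (Polynomial.nthRoots n (1:ℂ)) = n := by
  have hsplits : Splits (X ^ n - C (1:ℂ)) := IsAlgClosed.splits _
  have := (splits_iff_card_roots).mp hsplits
  rwa [natDegree_X_pow_sub_C] at this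

-- product over nth roots of unity in ℂ of (ζ - c)
lemma aux_nthRoots_prod (n : ℕ) (hn : 1 ≤ n) (c : ℂ) :
    ((Polynomial.nthRoots n (1 : ℂ)).map (fun ζ => ζ - c)).prod = (-1)^n * (c^n - 1) := by
  have hmonic : (X ^ n - C (1:ℂ)).Monic := monic_X_pow_sub_C 1 (by omega)
  have hsplits : Splits (X ^ n - C (1:ℂ)) := IsAlgClosed.splits _
  have hfact := hsplits.eq_prod_roots_of_monic hmonic
  have hcard : Multiset.card (Polynomial.nthRoots n (1:ℂ)) = n := aux_nthRoots_card n
  have hnr : Polynomial.nthRoots n (1:ℂ) = (X ^ n - C (1:ℂ)).roots := rfl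
  have heval : c ^ n - 1 = ((Polynomial.nthRoots n (1:ℂ)).map (fun ζ => c - ζ)).prod := by
    have := congrArg (eval c) hfact
    rw [eval_sub, eval_pow, eval_X, eval_C, eval_multiset_prod, Multiset.map_map] at this
    rw [hnr, this]
    congr 1
    apply Multiset.map_congr rfl
    intro x _
    simp
  have : ((Polynomial.nthRoots n (1:ℂ)).map (fun ζ => ζ - c)).prod
      = ((Polynomial.nthRoots n (1:ℂ)).map (fun ζ => (-1) * (c - ζ))).prod := by
    congr 1; apply Multiset.map_congr rfl; intro ζ _; ring
  rw [this, Multiset.prod_map_mul, heval]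
  congr 1
  rw [Multiset.map_const', Multiset.prod_replicate, hcard]

lemma aux_resultant_formula {p : ℕ} [hp : Fact p.Prime]
    (f : Polynomial ℤ) (hf : f ≠ 0) (d : ℕ) (hd : f.natDegree = d)
    (α : Fin d → ℚ_[p])
    (hsplit : f.map (Int.castRingHom ℚ_[p]) =
      C ((f.leadingCoeff : ℚ_[p])) * ∏ i : Fin d, (X - C (α i)))
    (n : ℕ) (hn : 1 ≤ n) (r : ℤ) (hr : (r : ℂ) = cyclicResultantC n f) :
    (r : ℚ_[p]) = (-1)^(n*d) * ((f.leadingCoeff : ℚ_[p]))^n * ∏ i : Fin d, ((α i)^n - 1) := by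
  classical
  have hinj : Function.Injective (Int.castRingHom ℚ) := Int.cast_injective
  set q : ℚ[X] := f.map (Int.castRingHom ℚ) with hqdef
  have hq0 : q ≠ 0 := by
    rw [hqdef, Ne, Polynomial.map_eq_zero_iff hinj]; exact hf
  have hqd : q.natDegree = d := by rw [hqdef, natDegree_map_eq_of_injective hinj, hd]
  have hqlc : q.leadingCoeff = (f.leadingCoeff : ℚ) := leadingCoeff_map_of_injective hinj f
  set K := q.SplittingField with hK
  have hsK : Splits (q.map (algebraMap ℚ K)) := SplittingField.splits q
  set Q : Polynomial K := q.map (algebraMap ℚ K) with hQdef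
  have hQs : Q.Splits := hsK
  set Rts := Q.roots with hRts
  have hQd : Q.natDegree = d := by
    rw [hQdef, natDegree_map_eq_of_injective (algebraMap ℚ K).injective, hqd]
  have hcard : Multiset.card Rts = d := by
    rw [hRts, (splits_iff_card_roots).mp hQs, hQd]
  have hQlc : Q.leadingCoeff = algebraMap ℚ K q.leadingCoeff :=
    leadingCoeff_map_of_injective (algebraMap ℚ K).injective q
  have hQfact : Q = C Q.leadingCoeff * (Rts.map fun a => X - C a).prod :=
    hQs.eq_prod_roots
  -- the universal quantity e
  set e : K := (algebraMap ℚ K q.leadingCoeff)^n * ((Rts.map (fun b => b^n - 1)).prod) with he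
  -- map to any field: generic computation
  have key : ∀ (L : Type) [inst : Field L] [inst2 : Algebra ℚ L] (χ : K →ₐ[ℚ] L),
      Q.map (χ : K →+* L) = f.map (Int.castRingHom L) ∧
      (χ e = ((f.leadingCoeff : L))^n * (((Rts.map (χ : K → L)).map (fun b => b^n - 1)).prod)) := by
    intro L _ _ χ
    constructor
    · show ((f.map (Int.castRingHom ℚ)).map (algebraMap ℚ K)).map (χ : K →+* L)
          = f.map (Int.castRingHom L)
      rw [Polynomial.map_map, Polynomial.map_map]
      congr 1
      exact Subsingleton.elim _ _
    · rw [he]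
      rw [map_mul, map_pow]
      have h1 : χ (algebraMap ℚ K q.leadingCoeff) = algebraMap ℚ L q.leadingCoeff := χ.commutes _
      have h2 : algebraMap ℚ L q.leadingCoeff = ((f.leadingCoeff : ℚ) : L) := by
        rw [hqlc]; exact eq_ratCast (algebraMap ℚ L) _
      have h3 : ((f.leadingCoeff : ℚ) : L) = (f.leadingCoeff : L) := by push_cast; ring
      rw [h1, h2, h3]
      congr 1
      rw [map_multiset_prod, Multiset.map_map, Multiset.map_map]
      congr 1
      apply Multiset.map_congr rfl
      intro b _
      simp
  -- ℂ side
  haveI : FiniteDimensional ℚ K := inferInstance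
  haveI : Algebra.IsAlgebraic ℚ K := Algebra.IsAlgebraic.of_finite ℚ K
  let φ : K →ₐ[ℚ] ℂ := IsAlgClosed.lift
  obtain ⟨hφmap, hφe⟩ := key ℂ φ
  have hφQlc : φ Q.leadingCoeff = (f.leadingCoeff : ℂ) := by
    rw [hQlc]
    have h1 : φ (algebraMap ℚ K q.leadingCoeff) = algebraMap ℚ ℂ q.leadingCoeff := φ.commutes _
    rw [h1, hqlc, eq_ratCast (algebraMap ℚ ℂ)]
    push_cast; ring
  have hPc : f.map (Int.castRingHom ℂ)
      = C (φ Q.leadingCoeff) * ((Rts.map (φ : K → ℂ)).map fun a => X - C a).prod := by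
    rw [← hφmap]
    conv_lhs => rw [hQfact]
    rw [Polynomial.map_mul, Polynomial.map_C, Polynomial.map_multiset_prod, Multiset.map_map,
      Multiset.map_map]
    congr 2
    apply Multiset.map_congr rfl
    intro b _
    simp
  have hcyc : cyclicResultantC n f = φ ((-1)^(n*d) * e) := by
    have hmapneg : φ ((-1:K)^(n*d)) = (-1:ℂ)^(n*d) := by rw [map_pow, map_neg, map_one]
    calc cyclicResultantC n f
        = ((Polynomial.nthRoots n (1:ℂ)).map fun ζ => eval ζ (f.map (Int.castRingHom ℂ))).prod := by
          unfold cyclicResultantC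
          congr 1
          apply Multiset.map_congr rfl
          intro ζ _
          rw [aeval_def, ← eval_map]
          congr 2
      _ = ((Polynomial.nthRoots n (1:ℂ)).map fun ζ =>
            (φ Q.leadingCoeff) * ((Rts.map (φ : K → ℂ)).map fun b => ζ - b).prod).prod := by
          congr 1
          apply Multiset.map_congr rfl
          intro ζ _
          rw [hPc, eval_mul, eval_C, eval_multiset_prod, Multiset.map_map]
          congr 2
          apply Multiset.map_congr rfl
          intro b _
          simp
      _ = (φ Q.leadingCoeff)^n
          * ((Polynomial.nthRoots n (1:ℂ)).map fun ζ =>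
              ((Rts.map (φ : K → ℂ)).map fun b => ζ - b).prod).prod := by
          rw [Multiset.prod_map_mul, Multiset.map_const', Multiset.prod_replicate, aux_nthRoots_card]
      _ = (φ Q.leadingCoeff)^n
          * ((Rts.map (φ : K → ℂ)).map fun b =>
              ((Polynomial.nthRoots n (1:ℂ)).map fun ζ => ζ - b).prod).prod := by
          rw [Multiset.prod_map_prod_map]
      _ = (φ Q.leadingCoeff)^n
          * ((Rts.map (φ : K → ℂ)).map fun b => (-1:ℂ)^n * (b^n - 1)).prod := by
          exact congrArg (φ Q.leadingCoeff ^ n * ·) (congrArg Multiset.prod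
            (Multiset.map_congr rfl (fun b _ => aux_nthRoots_prod n hn b)))
      _ = (φ Q.leadingCoeff)^n
          * ((-1:ℂ)^(n*d) * ((Rts.map (φ : K → ℂ)).map fun b => (b^n - 1)).prod) := by
          rw [Multiset.prod_map_mul, Multiset.map_const', Multiset.prod_replicate,
            Multiset.card_map, hcard, ← pow_mul]
      _ = φ ((-1)^(n*d) * e) := by
          rw [map_mul, hφe, hmapneg, hφQlc]
          ring
  have hre : algebraMap ℚ K ((r : ℚ)) = (-1)^(n*d) * e := by
    have hinjφ : Function.Injective (φ : K → ℂ) := φ.toRingHom.injective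
    apply hinjφ
    have h1 : φ (algebraMap ℚ K ((r : ℚ))) = algebraMap ℚ ℂ ((r : ℚ)) := φ.commutes _
    have h2 : algebraMap ℚ ℂ ((r : ℚ)) = (r : ℂ) := by
      rw [eq_ratCast (algebraMap ℚ ℂ)]; push_cast; ring
    rw [h1, h2, hr, hcyc]
  -- ℚ_p side
  have hqp : q.map (algebraMap ℚ ℚ_[p]) = f.map (Int.castRingHom ℚ_[p]) := by
    show ((f.map (Int.castRingHom ℚ)).map (algebraMap ℚ ℚ_[p])) = _
    rw [Polynomial.map_map]
    congr 1
  have hsplitsQp : Splits (q.map (algebraMap ℚ ℚ_[p])) := by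
    rw [hqp, hsplit]
    apply Splits.mul
    · exact Splits.C _
    · apply Splits.prod
      intro i _
      exact Splits.X_sub_C _
  let ψ : K →ₐ[ℚ] ℚ_[p] := SplittingField.lift q hsplitsQp
  obtain ⟨hψmap, hψe⟩ := key ℚ_[p] ψ
  have ha0 : ((f.leadingCoeff : ℚ_[p])) ≠ 0 := by
    simp only [ne_eq, Int.cast_eq_zero]
    exact leadingCoeff_ne_zero.mpr hf
  have hrootsF : (f.map (Int.castRingHom ℚ_[p])).roots = Finset.univ.val.map α := by
    rw [hsplit, roots_C_mul _ ha0]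
    have h1 : (∏ i : Fin d, (X - C (α i)))
        = ((Finset.univ.val.map α).map fun a => X - C a).prod := by
      rw [Finset.prod_eq_multiset_prod, Multiset.map_map]
      rfl
    rw [h1, roots_multiset_prod_X_sub_C]
  have hψroots : Rts.map (ψ : K → ℚ_[p]) = Finset.univ.val.map α := by
    have h1 := hQs.roots_map (ψ : K →+* ℚ_[p])
    rw [hψmap, hrootsF] at h1
    exact h1.symm
  have hψre := congrArg (ψ : K → ℚ_[p]) hre
  have h2 : ψ (algebraMap ℚ K ((r : ℚ))) = (r : ℚ_[p]) := by
    rw [ψ.commutes, eq_ratCast (algebraMap ℚ ℚ_[p])]; push_cast; ring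
  have hmapneg : ψ ((-1:K)^(n*d)) = (-1:ℚ_[p])^(n*d) := by rw [map_pow, map_neg, map_one]
  rw [h2, map_mul, hmapneg, hψe, hψroots] at hψre
  rw [hψre, Multiset.map_map]
  rw [show (Multiset.map ((fun b => b ^ n - 1) ∘ α) Finset.univ.val)
      = Multiset.map (fun i => α i ^ n - 1) Finset.univ.val from rfl]
  rw [← Finset.prod_eq_multiset_prod]
  ring



lemma aux_one_le_prod (B : Multiset ℝ) (h : ∀ x ∈ B, 1 ≤ x) : 1 ≤ B.prod := by
  induction B using Multiset.induction_on with
  | empty => simp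
  | cons a B ih =>
    rw [Multiset.prod_cons]
    have h1 : 1 ≤ a := h a (by simp)
    have h2 : 1 ≤ B.prod := ih (fun x hx => h x (by simp [hx]))
    nlinarith

lemma aux_coeff_le_one (S : Multiset ℚ_[p]) (h : ∀ x ∈ S, ‖x‖ ≤ 1) (k : ℕ) :
    ‖((S.map fun c => X - C c).prod).coeff k‖ ≤ 1 := by
  induction S using Multiset.induction_on generalizing k with
  | empty =>
    rcases Nat.eq_zero_or_pos k with rfl | hk
    · simp
    · have : ((0:Multiset ℚ_[p]).map fun c => X - C c).prod = 1 := by simp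
      rw [this, Polynomial.coeff_one, if_neg (by omega : ¬ k = 0)]
      simp
  | cons a S ih =>
    have hIH := ih (fun x hx => h x (by simp [hx]))
    have ha : ‖a‖ ≤ 1 := h a (by simp)
    rw [Multiset.map_cons, Multiset.prod_cons, sub_mul]
    set P := (S.map fun c => X - C c).prod with hP
    rcases Nat.eq_zero_or_pos k with rfl | hk
    · have h0 : ((X * P - C a * P).coeff 0) = - (a * P.coeff 0) := by
        simp [Polynomial.coeff_sub, Polynomial.mul_coeff_zero, Polynomial.coeff_C_mul]
      rw [h0, norm_neg, norm_mul]
      exact mul_le_one₀ ha (norm_nonneg _) (hIH 0)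
    · obtain ⟨j, rfl⟩ := Nat.exists_eq_add_of_lt hk
      simp only [zero_add]
      have hco : (X * P - C a * P).coeff (j+1) = P.coeff j - a * P.coeff (j+1) := by
        rw [Polynomial.coeff_sub, Polynomial.coeff_X_mul, Polynomial.coeff_C_mul]
      rw [hco, sub_eq_add_neg]
      refine le_trans (Padic.nonarchimedean _ _) (max_le (hIH j) ?_)
      rw [norm_neg, norm_mul]
      exact mul_le_one₀ ha (norm_nonneg _) (hIH (j+1))

lemma aux_norm_u {p : ℕ} [hp : Fact p.Prime]
    (f : Polynomial ℤ) (hf : f ≠ 0) (d : ℕ) (hd : f.natDegree = d)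
    (hcont : ¬ (p : ℤ) ∣ f.content)
    (α : Fin d → ℚ_[p])
    (hsplit : f.map (Int.castRingHom ℚ_[p]) =
      C ((f.leadingCoeff : ℚ_[p])) * ∏ i : Fin d, (X - C (α i))) :
    ‖(f.leadingCoeff : ℚ_[p]) * ∏ i ∈ Finset.univ.filter (fun i => 1 < ‖α i‖), α i‖ = 1 := by
  classical
  have h2p : 2 ≤ p := hp.out.two_le
  have hp1 : (1:ℝ) < p := by exact_mod_cast hp.out.one_lt
  set a : ℚ_[p] := (f.leadingCoeff : ℚ_[p]) with ha
  set Sbig := Finset.univ.filter (fun i : Fin d => 1 < ‖α i‖) with hSbig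
  set B : Multiset ℚ_[p] := Sbig.val.map α with hB
  set S : Multiset ℚ_[p] := (Finset.univ.filter (fun i : Fin d => ¬ 1 < ‖α i‖)).val.map α with hS
  set PB := (B.map fun c => X - C c).prod with hPB
  set PS := (S.map fun c => X - C c).prod with hPSdef
  set W := (B.map fun x => ‖x‖).prod with hW
  have hBμ : ∀ x ∈ B, (p:ℝ) ≤ ‖x‖ := by
    intro x hx
    rw [hB] at hx
    obtain ⟨i, hi, rfl⟩ := Multiset.mem_map.mp hx
    have : i ∈ Sbig := hi
    rw [hSbig, Finset.mem_filter] at this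
    exact aux_p_le_norm this.2
  have hSle : ∀ x ∈ S, ‖x‖ ≤ 1 := by
    intro x hx
    rw [hS] at hx
    obtain ⟨i, hi, rfl⟩ := Multiset.mem_map.mp hx
    have : i ∈ Finset.univ.filter (fun i : Fin d => ¬ 1 < ‖α i‖) := hi
    rw [Finset.mem_filter] at this
    exact le_of_not_gt this.2
  have hW1 : 1 ≤ W := by
    rw [hW]
    apply aux_one_le_prod
    intro x hx
    obtain ⟨y, hy, rfl⟩ := Multiset.mem_map.mp hx
    exact le_trans (by linarith) (hBμ y hy)
  have hW0 : (0:ℝ) < W := lt_of_lt_of_le one_pos hW1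
  have hsplitBS : f.map (Int.castRingHom ℚ_[p]) = C a * (PB * PS) := by
    rw [hsplit]
    congr 1
    rw [← Finset.prod_filter_mul_prod_filter_not Finset.univ (fun i => 1 < ‖α i‖)
      (fun i => X - C (α i))]
    congr 1
    · rw [Finset.prod_eq_multiset_prod, hPB, hB, Multiset.map_map]
      rfl
    · rw [Finset.prod_eq_multiset_prod, hPSdef, hS, Multiset.map_map]
      rfl
  have hcoeff : ∀ k, ((f.coeff k : ℚ_[p])) = a * (PB * PS).coeff k := by
    intro k
    have := congrArg (fun g => Polynomial.coeff g k) hsplitBS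
    simpa [Polynomial.coeff_map, Polynomial.coeff_C_mul] using this
  have hPBbound : ∀ j, ‖PB.coeff j‖ ≤ W := by
    intro j
    have h1 := aux_coeff_bound B (p:ℝ) (le_of_lt hp1) hBμ j
    have h2 : (1:ℝ) ≤ (p:ℝ)^j := one_le_pow₀ (le_of_lt hp1)
    calc ‖PB.coeff j‖ = ‖PB.coeff j‖ * 1 := (mul_one _).symm
    _ ≤ ‖PB.coeff j‖ * (p:ℝ)^j := by
        exact mul_le_mul_of_nonneg_left h2 (norm_nonneg _)
    _ ≤ W := h1
  have hbound : ∀ k, ‖(PB * PS).coeff k‖ ≤ W := by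
    intro k
    rw [Polynomial.coeff_mul]
    apply aux_sum_norm_le _ _ (le_of_lt hW0)
    intro x _
    rw [norm_mul]
    calc ‖PB.coeff x.1‖ * ‖PS.coeff x.2‖ ≤ W * 1 :=
      mul_le_mul (hPBbound x.1) (aux_coeff_le_one S hSle x.2) (norm_nonneg _) (le_of_lt hW0)
    _ = W := mul_one _
  have hPB0 : ‖PB.coeff 0‖ = W := by
    rw [Polynomial.coeff_zero_eq_eval_zero, hPB, eval_multiset_prod, Multiset.map_map]
    have h1 : (B.map (eval 0 ∘ fun c => X - C c)) = B.map (fun c => -c) :=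
      Multiset.map_congr rfl (by intro c _; simp)
    rw [h1, aux_multiset_norm_prod, Multiset.map_map, hW]
    congr 1
    exact Multiset.map_congr rfl (by intro c _; simp)
  have hPSm : PS.coeff (Multiset.card S) = 1 := by
    have hmonic : PS.Monic :=
      monic_multiset_prod_of_monic _ _ (fun a _ => monic_X_sub_C a)
    have hdeg : PS.natDegree = Multiset.card S := by
      rw [hPSdef, natDegree_multiset_prod_X_sub_C_eq_card]
    rw [← hdeg]
    exact hmonic.coeff_natDegree
  have hmain : ‖(PB * PS).coeff (Multiset.card S)‖ = W := by
    set m := Multiset.card S with hm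
    rw [Polynomial.coeff_mul]
    have hmem : ((0:ℕ), m) ∈ Finset.HasAntidiagonal.antidiagonal m := by simp
    rw [← Finset.add_sum_erase _ _ hmem]
    have hrest : ‖∑ x ∈ (Finset.HasAntidiagonal.antidiagonal m).erase (0, m),
        PB.coeff x.1 * PS.coeff x.2‖ ≤ W * (p:ℝ)⁻¹ := by
      apply aux_sum_norm_le _ _ (by positivity)
      intro x hx
      have hx1 : x.1 + x.2 = m := Finset.HasAntidiagonal.mem_antidiagonal.mp (Finset.mem_of_mem_erase hx)
      have hxne : x ≠ (0, m) := Finset.ne_of_mem_erase hx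
      have hx1pos : 1 ≤ x.1 := by
        rcases Nat.eq_zero_or_pos x.1 with h0 | h0
        · exfalso; apply hxne
          have : x.2 = m := by omega
          exact Prod.ext h0 this
        · exact h0
      have h1 := aux_coeff_bound B (p:ℝ) (le_of_lt hp1) hBμ x.1
      have hcb : ‖PB.coeff x.1‖ ≤ W * (p:ℝ)⁻¹ := by
        have hppos : (0:ℝ) < (p:ℝ)^x.1 := by positivity
        rw [← le_div_iff₀ hppos] at h1
        calc ‖PB.coeff x.1‖ ≤ W / (p:ℝ)^x.1 := h1
        _ ≤ W / (p:ℝ)^1 := by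
            apply div_le_div_of_nonneg_left (le_of_lt hW0) (by positivity)
            exact pow_le_pow_right₀ (le_of_lt hp1) hx1pos
        _ = W * (p:ℝ)⁻¹ := by rw [pow_one, div_eq_mul_inv]
      rw [norm_mul]
      calc ‖PB.coeff x.1‖ * ‖PS.coeff x.2‖ ≤ (W * (p:ℝ)⁻¹) * 1 :=
        mul_le_mul hcb (aux_coeff_le_one S hSle x.2) (norm_nonneg _) (by positivity)
      _ = W * (p:ℝ)⁻¹ := mul_one _
    have hlt : W * (p:ℝ)⁻¹ < W := by
      have : (p:ℝ)⁻¹ < 1 := by rw [inv_lt_one_iff₀]; right; exact hp1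
      nlinarith
    have hmainterm : ‖PB.coeff (0:ℕ) * PS.coeff m‖ = W := by
      rw [hPSm, mul_one, hPB0]
    have hne : ‖PB.coeff (0:ℕ) * PS.coeff m‖ ≠
        ‖∑ x ∈ (Finset.HasAntidiagonal.antidiagonal m).erase (0, m), PB.coeff x.1 * PS.coeff x.2‖ := by
      rw [hmainterm]
      intro hcon
      rw [← hcon] at hrest
      linarith
    rw [Padic.add_eq_max_of_ne hne, hmainterm]
    rw [max_eq_left]
    exact le_trans hrest (le_of_lt hlt)
  -- putting it together
  have hWprod : W = ∏ i ∈ Sbig, ‖α i‖ := by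
    rw [hW, hB, Multiset.map_map, Finset.prod_eq_multiset_prod]
    rfl
  have hnormu : ‖a * ∏ i ∈ Sbig, α i‖ = ‖a‖ * W := by
    rw [norm_mul, hWprod, norm_prod]
  have hle1 : ‖a‖ * W ≤ 1 := by
    have h1 := hcoeff (Multiset.card S)
    have h2 : ‖((f.coeff (Multiset.card S) : ℚ_[p]))‖ ≤ 1 := Padic.norm_int_le_one _
    rw [h1, norm_mul, hmain] at h2
    exact h2
  have hge1 : 1 ≤ ‖a‖ * W := by
    obtain ⟨k, hk⟩ : ∃ k, ¬ (p:ℤ) ∣ f.coeff k := by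
      by_contra hcon
      push_neg at hcon
      exact hcont (Finset.dvd_gcd fun i _ => hcon i)
    have h1 : ‖((f.coeff k : ℚ_[p]))‖ = 1 := by
      have hle := Padic.norm_int_le_one (f.coeff k) (p := p)
      have hnlt : ¬ ‖((f.coeff k : ℚ_[p]))‖ < 1 := by
        rw [Padic.norm_intCast_lt_one_iff]
        exact hk
      linarith [lt_or_ge ‖((f.coeff k : ℚ_[p]))‖ 1]
    calc (1:ℝ) = ‖((f.coeff k : ℚ_[p]))‖ := h1.symm
    _ = ‖a‖ * ‖(PB * PS).coeff k‖ := by rw [hcoeff k, norm_mul]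
    _ ≤ ‖a‖ * W := mul_le_mul_of_nonneg_left (hbound k) (norm_nonneg _)
  rw [hnormu]
  linarith

end AuxLemmas

/-- (Explicit formula for the `p`-adic limit of `p`-power-th cyclic
resultants.) Let `f ∈ ℤ[t]` be nonzero of degree `d`, with content prime to `p`, splitting
over `ℚ_p` as `f = a₀ ∏ᵢ (t − αᵢ)`. Then `u = a₀ ∏_{‖αᵢ‖>1} αᵢ` has `‖u‖ = 1`; for the unique
`(p−1)`-th roots of unity `ξ` with `‖u − ξ‖ < 1` and `ζᵢ` with `‖αᵢ − ζᵢ‖ < 1` (for each `i`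
with `‖αᵢ‖ = 1`), the resultants `Res(t^{p^n} − 1, f)` converge in `ℤ_p` to
`(−1)^{p·d + #{i : ‖αᵢ‖<1}} · ξ · ∏_{‖αᵢ‖=1} (ζᵢ − 1)`, which is `0` iff some `ζᵢ = 1`. -/
theorem padic_limit_of_cyclic_resultants_explicit
    (p : ℕ) [hp : Fact p.Prime]
    (f : Polynomial ℤ) (hf : f ≠ 0) (d : ℕ) (hd : f.natDegree = d)
    (hcont : ¬ (p : ℤ) ∣ f.content)
    (α : Fin d → ℚ_[p])
    (hsplit : f.map (Int.castRingHom ℚ_[p]) =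
      Polynomial.C ((f.leadingCoeff : ℚ_[p])) * ∏ i : Fin d, (Polynomial.X - Polynomial.C (α i)))
    (R : ℕ → ℤ) (hR : ∀ n, ((R n : ℤ) : ℂ) = cyclicResultantC (p ^ n) f)
    (u : ℚ_[p])
    (hu : u = (f.leadingCoeff : ℚ_[p]) *
      ∏ i ∈ Finset.univ.filter (fun i => 1 < ‖α i‖), α i) :
    ‖u‖ = 1 ∧
    ∀ ξ : ℚ_[p], ξ ^ (p - 1) = 1 → ‖u - ξ‖ < 1 →
    ∀ ζ : Fin d → ℚ_[p],
      (∀ i, ‖α i‖ = 1 → (ζ i) ^ (p - 1) = 1 ∧ ‖α i - ζ i‖ < 1) →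
      (Tendsto (fun n => ((R n : ℚ_[p]))) atTop
        (𝓝 ((-1) ^ (p * d + (Finset.univ.filter (fun i => ‖α i‖ < 1)).card) * ξ *
          ∏ i ∈ Finset.univ.filter (fun i => ‖α i‖ = 1), (ζ i - 1))) ∧
      (((-1 : ℚ_[p]) ^ (p * d + (Finset.univ.filter (fun i => ‖α i‖ < 1)).card) * ξ *
          ∏ i ∈ Finset.univ.filter (fun i => ‖α i‖ = 1), (ζ i - 1)) = 0 ↔
        ∃ i, ‖α i‖ = 1 ∧ ζ i = 1)) := by
  classical
  have h2p : 2 ≤ p := hp.out.two_le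
  have hp1 : (1:ℝ) < p := by exact_mod_cast hp.out.one_lt
  have hnormu : ‖u‖ = 1 := by rw [hu]; exact aux_norm_u f hf d hd hcont α hsplit
  refine ⟨hnormu, ?_⟩
  intro ξ hξpow hξ ζ hζ
  constructor
  · -- the limit
    have hformula : ∀ n : ℕ, ((R n : ℚ_[p]))
        = (-1)^(p^n*d) * ((f.leadingCoeff : ℚ_[p]))^(p^n) * ∏ i : Fin d, ((α i)^(p^n) - 1) :=
      fun n => aux_resultant_formula f hf d hd α hsplit (p^n)
        (Nat.one_le_pow _ _ hp.out.pos) (R n) (hR n)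
    have e1 : (Finset.univ.filter fun i : Fin d => ¬ ‖α i‖ < 1 ∧ ‖α i‖ = 1)
        = Finset.univ.filter (fun i => ‖α i‖ = 1) := by
      ext i
      simp only [Finset.mem_filter, Finset.mem_univ, true_and]
      constructor
      · rintro ⟨-, h⟩; exact h
      · intro h; exact ⟨by rw [h]; exact lt_irrefl 1, h⟩
    have e2 : (Finset.univ.filter fun i : Fin d => ¬ ‖α i‖ < 1 ∧ ¬ ‖α i‖ = 1)
        = Finset.univ.filter (fun i => 1 < ‖α i‖) := by
      ext i
      simp only [Finset.mem_filter, Finset.mem_univ, true_and]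
      constructor
      · rintro ⟨h1, h2⟩
        exact lt_of_le_of_ne (le_of_not_gt h1) (fun hh => h2 hh.symm)
      · intro h
        exact ⟨by linarith, by intro hh; rw [hh] at h; linarith⟩
    have hsplit3 : ∀ N : ℕ, (∏ i : Fin d, ((α i)^N - 1))
        = (∏ i ∈ Finset.univ.filter (fun i => ‖α i‖ < 1), ((α i)^N - 1))
          * (∏ i ∈ Finset.univ.filter (fun i => ‖α i‖ = 1), ((α i)^N - 1))
          * (∏ i ∈ Finset.univ.filter (fun i => 1 < ‖α i‖), ((α i)^N - 1)) := by
      intro N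
      rw [← Finset.prod_filter_mul_prod_filter_not Finset.univ (fun i => ‖α i‖ < 1)
        (fun i => (α i)^N - 1)]
      rw [← Finset.prod_filter_mul_prod_filter_not
        (Finset.univ.filter (fun i => ¬ ‖α i‖ < 1)) (fun i => ‖α i‖ = 1)
        (fun i => (α i)^N - 1)]
      rw [Finset.filter_filter, Finset.filter_filter, e1, e2, mul_assoc]
    have hbig : ∀ N : ℕ, ((f.leadingCoeff : ℚ_[p]))^N
          * ∏ i ∈ Finset.univ.filter (fun i => 1 < ‖α i‖), ((α i)^N - 1)
        = u^N * ∏ i ∈ Finset.univ.filter (fun i => 1 < ‖α i‖), (1 - ((α i)⁻¹)^N) := by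
      intro N
      have hne : ∀ i ∈ Finset.univ.filter (fun i : Fin d => 1 < ‖α i‖), α i ≠ 0 := by
        intro i hi h0
        rw [Finset.mem_filter] at hi
        rw [h0] at hi
        simp at hi
        linarith [hi]
      have h1 : ∏ i ∈ Finset.univ.filter (fun i : Fin d => 1 < ‖α i‖), ((α i)^N - 1)
          = ∏ i ∈ Finset.univ.filter (fun i : Fin d => 1 < ‖α i‖),
              ((α i)^N * (1 - ((α i)⁻¹)^N)) := by
        apply Finset.prod_congr rfl
        intro i hi
        rw [mul_sub, mul_one, ← mul_pow, mul_inv_cancel₀ (hne i hi), one_pow]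
      rw [h1, Finset.prod_mul_distrib, hu, mul_pow, ← Finset.prod_pow]
      ring
    have heq : ∀ n : ℕ, 1 ≤ n → ((R n : ℚ_[p]))
        = (-1)^(p*d) * u^(p^n)
          * (∏ i ∈ Finset.univ.filter (fun i => ‖α i‖ < 1), ((α i)^(p^n) - 1))
          * (∏ i ∈ Finset.univ.filter (fun i => ‖α i‖ = 1), ((α i)^(p^n) - 1))
          * (∏ i ∈ Finset.univ.filter (fun i => 1 < ‖α i‖), (1 - ((α i)⁻¹)^(p^n))) := by
      intro n hn
      have hparity : (-1:ℚ_[p])^(p^n) = (-1)^p := by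
        rcases Nat.even_or_odd p with he | ho
        · rw [(Nat.even_pow.mpr ⟨he, by omega⟩).neg_one_pow, he.neg_one_pow]
        · rw [(ho.pow).neg_one_pow, ho.neg_one_pow]
      have hsign : (-1:ℚ_[p])^(p^n*d) = (-1)^(p*d) := by
        rw [pow_mul, pow_mul, hparity]
      rw [hformula n, hsplit3 (p^n), hsign]
      have hb := hbig (p^n)
      linear_combination ((-1:ℚ_[p])^(p*d)
        * (∏ i ∈ Finset.univ.filter (fun i => ‖α i‖ < 1), ((α i)^(p^n) - 1))
        * (∏ i ∈ Finset.univ.filter (fun i => ‖α i‖ = 1), ((α i)^(p^n) - 1))) * hb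
    have t1 : Tendsto (fun n => u^(p^n)) atTop (𝓝 ξ) := aux_tendsto_pow_p_pow hξpow hξ
    have t2 : Tendsto (fun n => ∏ i ∈ Finset.univ.filter (fun i => ‖α i‖ < 1),
        ((α i)^(p^n) - 1)) atTop
        (𝓝 (∏ _i ∈ Finset.univ.filter (fun i => ‖α i‖ < 1), (-1 : ℚ_[p]))) := by
      apply tendsto_finset_prod
      intro i hi
      have hlt : ‖α i‖ < 1 := (Finset.mem_filter.mp hi).2
      have h2 := (aux_tendsto_pow_p_zero (p := p) hlt).sub_const 1
      simpa using h2
    have t3 : Tendsto (fun n => ∏ i ∈ Finset.univ.filter (fun i => ‖α i‖ = 1),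
        ((α i)^(p^n) - 1)) atTop
        (𝓝 (∏ i ∈ Finset.univ.filter (fun i => ‖α i‖ = 1), (ζ i - 1))) := by
      apply tendsto_finset_prod
      intro i hi
      have h1 := hζ i (Finset.mem_filter.mp hi).2
      exact (aux_tendsto_pow_p_pow h1.1 h1.2).sub_const 1
    have t4 : Tendsto (fun n => ∏ i ∈ Finset.univ.filter (fun i => 1 < ‖α i‖),
        (1 - ((α i)⁻¹)^(p^n))) atTop
        (𝓝 (∏ _i ∈ Finset.univ.filter (fun i => 1 < ‖α i‖), (1 : ℚ_[p]))) := by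
      apply tendsto_finset_prod
      intro i hi
      have hbig1 : 1 < ‖α i‖ := (Finset.mem_filter.mp hi).2
      have hinv : ‖(α i)⁻¹‖ < 1 := by
        rw [norm_inv, inv_lt_one_iff₀]; right; exact hbig1
      have h2 := (aux_tendsto_pow_p_zero (p := p) hinv).const_sub 1
      simpa using h2
    have tg := ((((tendsto_const_nhds (x := (-1:ℚ_[p])^(p*d))).mul t1).mul t2).mul t3).mul t4
    have hval : ((-1:ℚ_[p])^(p*d) * ξ
        * (∏ _i ∈ Finset.univ.filter (fun i => ‖α i‖ < 1), (-1 : ℚ_[p]))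
        * (∏ i ∈ Finset.univ.filter (fun i => ‖α i‖ = 1), (ζ i - 1))
        * (∏ _i ∈ Finset.univ.filter (fun i => 1 < ‖α i‖), (1 : ℚ_[p])))
        = (-1) ^ (p * d + (Finset.univ.filter (fun i => ‖α i‖ < 1)).card) * ξ *
          ∏ i ∈ Finset.univ.filter (fun i => ‖α i‖ = 1), (ζ i - 1) := by
      rw [Finset.prod_const, Finset.prod_const_one, pow_add]
      ring
    refine Tendsto.congr' ?_ (hval ▸ tg)
    filter_upwards [eventually_ge_atTop 1] with n hn
    exact (heq n hn).symm
  · -- zero iff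
    have hξ0 : ξ ≠ 0 := by
      intro h
      rw [h, zero_pow (by omega : p - 1 ≠ 0)] at hξpow
      exact zero_ne_one hξpow
    have hneg : ((-1:ℚ_[p]))
        ^ (p * d + (Finset.univ.filter (fun i => ‖α i‖ < 1)).card) ≠ 0 :=
      pow_ne_zero _ (by norm_num)
    constructor
    · intro h0
      have hprod : ∏ i ∈ Finset.univ.filter (fun i => ‖α i‖ = 1), (ζ i - 1) = 0 := by
        by_contra hne
        exact mul_ne_zero (mul_ne_zero hneg hξ0) hne h0
      obtain ⟨i, hi, hzero⟩ := Finset.prod_eq_zero_iff.mp hprod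
      exact ⟨i, (Finset.mem_filter.mp hi).2, by
        have := sub_eq_zero.mp hzero; exact this⟩
    · rintro ⟨i, hi1, hi2⟩
      have hprod : ∏ i ∈ Finset.univ.filter (fun i => ‖α i‖ = 1), (ζ i - 1) = 0 :=
        Finset.prod_eq_zero (Finset.mem_filter.mpr ⟨Finset.mem_univ i, hi1⟩)
          (by rw [hi2]; ring)
      rw [hprod, mul_zero]
end

section
/- Let p be a prime number, m a positive integer with p ∤ m, and f ∈ ℤ[t] a monic polynomial with f ≡ Φ_m (mod p), where Φ_m is the m-th cyclotomic polynomial. Then lim_{n→∞} Res(t^{p^n} − 1, f(t)) = Φ_m(1) in ℤ_p; explicitly, the limit is q if m = q^e is a power of a prime q with e ≥ 1, and is 1 if m > 1 is not a prime power. -/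
open Filter Topology Polynomial

namespace CyclicResAux

open AdjoinRoot

variable {R S : Type*} [CommRing R] [CommRing S]

lemma repr_mk {f : R[X]} (hf : f.Monic) (q : R[X]) (i : Fin f.natDegree) :
    (AdjoinRoot.powerBasis' hf).basis.repr (AdjoinRoot.mk f q) i = (q %ₘ f).coeff i :=
  (AdjoinRoot.powerBasisAux'_repr_apply_to_fun hf _ i).trans (by rw [AdjoinRoot.modByMonicHom_mk])

lemma aeval_mul_pow (f g : R[X]) (j : ℕ) :
    aeval (root f) g * root f ^ j = mk f (g * X ^ j) := by
  rw [← aeval_eq (g * X ^ j), map_mul, map_pow, aeval_X]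

lemma entry {f : R[X]} (hf : f.Monic) (g : R[X]) (i j : Fin f.natDegree) :
    Algebra.leftMulMatrix (powerBasis' hf).basis (aeval (root f) g) i j
      = ((g * X ^ (j : ℕ)) %ₘ f).coeff i := by
  erw [Algebra.leftMulMatrix_eq_repr_mul]
  have hb : (powerBasis' hf).basis j = root f ^ (j : ℕ) := by
    rw [PowerBasis.coe_basis, powerBasis'_gen]
  rw [hb, aeval_mul_pow, repr_mk]

lemma norm_map [Nontrivial S] (φ : R →+* S) {f : R[X]} (hf : f.Monic)
    {fS : S[X]} (hfS : f.map φ = fS) (g : R[X]) :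
    φ (Algebra.norm R (aeval (root f) g)) =
      Algebra.norm S (aeval (root fS) (g.map φ)) := by
  subst hfS
  have hfm : (f.map φ).Monic := hf.map φ
  have hd : (f.map φ).natDegree = f.natDegree := hf.natDegree_map φ
  rw [Algebra.norm_eq_matrix_det (powerBasis' hf).basis,
      Algebra.norm_eq_matrix_det (powerBasis' hfm).basis,
      RingHom.map_det]
  refine Eq.trans (congrArg Matrix.det ?_)
    (Matrix.det_submatrix_equiv_self (finCongr hd.symm)
      (Algebra.leftMulMatrix (powerBasis' hfm).basis
        (aeval (root (f.map φ)) (g.map φ))))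
  ext i j
  rw [RingHom.mapMatrix_apply, Matrix.map_apply]
  erw [Matrix.submatrix_apply,
      entry hf g i j, entry hfm (g.map φ) (finCongr hd.symm i) (finCongr hd.symm j)]
  rw [show (g.map φ) * X ^ ((finCongr hd.symm j : Fin (f.map φ).natDegree) : ℕ)
        = (g * X ^ (j : ℕ)).map φ by
    rw [Polynomial.map_mul, Polynomial.map_pow, map_X]
    norm_num
    rfl,
    ← Polynomial.map_modByMonic _ hf, Polynomial.coeff_map]
  norm_num
  rfl

lemma minpoly_root_eq {F : ℂ[X]} (hF : F.Monic) : minpoly ℂ (root F) = F := by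
  refine (minpoly.unique' ℂ _ hF (by rw [aeval_eq, mk_self]) ?_).symm
  intro q hq
  by_cases hq0 : q = 0
  · exact Or.inl hq0
  · refine Or.inr fun hqa => ?_
    rw [aeval_eq, mk_eq_zero] at hqa
    exact absurd (Polynomial.degree_le_of_dvd hqa hq0) (not_le.mpr hq)

lemma norm_linear {F : ℂ[X]} (hF : F.Monic) (ζ : ℂ) :
    Algebra.norm ℂ (aeval (root F) (X - C ζ)) = (-1) ^ F.natDegree * F.eval ζ := by
  have h1 : aeval (root F) (X - C ζ)
      = root F - algebraMap ℂ (AdjoinRoot F) ζ := by rw [map_sub, aeval_X, aeval_C]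
  rw [h1, Algebra.norm_eq_matrix_det (powerBasis' hF).basis, map_sub, AlgHom.commutes]
  set M := Algebra.leftMulMatrix (powerBasis' hF).basis (root F) with hM
  have hchar : M.charpoly = F := by
    have h2 := charpoly_leftMulMatrix (powerBasis' hF)
    rw [powerBasis'_gen] at h2
    rw [hM, h2, minpoly_root_eq hF]
  have h3 : (algebraMap ℂ (Matrix (Fin (powerBasis' hF).dim) (Fin (powerBasis' hF).dim) ℂ)) ζ
      = Matrix.scalar _ ζ := by
    ext i j
    simp [Matrix.algebraMap_matrix_apply, Matrix.scalar_apply, Matrix.diagonal]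
  have h4 : (Matrix.scalar (Fin (powerBasis' hF).dim) ζ - M).det = F.eval ζ := by
    have h5 : F.eval ζ = M.charpoly.eval ζ := by rw [hchar]
    rw [h5, Matrix.charpoly, _root_.eval_det, Matrix.matPolyEquiv_charmatrix, eval_sub, eval_X, eval_C]
  rw [h3, (neg_sub (Matrix.scalar _ ζ) M).symm,
    Matrix.det_neg, h4, Fintype.card_fin]
  rfl

lemma normC {F : ℂ[X]} (hF : F.Monic) {N : ℕ} (hN : 0 < N) :
    Algebra.norm ℂ (aeval (root F) ((X : ℂ[X]) ^ N - 1)) =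
      ((-1) ^ F.natDegree) ^ N *
        ((nthRoots N (1 : ℂ)).map (fun ζ => F.eval ζ)).prod := by
  have hsplit : (X : ℂ[X]) ^ N - 1 = ((nthRoots N (1 : ℂ)).map (fun ζ => X - C ζ)).prod := by
    have h0 : (X : ℂ[X]) ^ N - 1 = X ^ N - C 1 := by rw [map_one]
    rw [h0]
    exact (IsAlgClosed.splits _).eq_prod_roots_of_monic (monic_X_pow_sub_C _ hN.ne')
  have hcard : Multiset.card (nthRoots N (1 : ℂ)) = N :=
    (Complex.isPrimitiveRoot_exp N hN.ne').card_nthRoots_one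
  rw [hsplit, map_multiset_prod, map_multiset_prod, Multiset.map_map, Multiset.map_map]
  rw [show ((⇑(Algebra.norm ℂ) ∘ ⇑(aeval (root F))) ∘ fun ζ : ℂ => X - C ζ)
      = fun ζ : ℂ => (-1 : ℂ) ^ F.natDegree * F.eval ζ from funext fun ζ => norm_linear hF ζ,
    Multiset.prod_map_mul, Multiset.map_const', Multiset.prod_replicate, hcard]

lemma prod_eval_eq {m N : ℕ} (hN : 0 < N) :
    ((nthRoots N (1 : ℂ)).map (fun ζ => (cyclotomic m ℂ).eval ζ)).prod =
      ((-1 : ℂ) ^ N) ^ m.totient *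
        ((cyclotomic m ℂ).roots.map (fun α => α ^ N - 1)).prod := by
  have hsplit : (X : ℂ[X]) ^ N - C 1 = ((nthRoots N (1 : ℂ)).map (fun ζ => X - C ζ)).prod :=
    (IsAlgClosed.splits _).eq_prod_roots_of_monic (monic_X_pow_sub_C _ hN.ne')
  have hcardN : Multiset.card (nthRoots N (1 : ℂ)) = N :=
    (Complex.isPrimitiveRoot_exp N hN.ne').card_nthRoots_one
  have hsplit2 : cyclotomic m ℂ = ((cyclotomic m ℂ).roots.map (fun α => X - C α)).prod :=
    (IsAlgClosed.splits _).eq_prod_roots_of_monic (cyclotomic.monic m ℂ)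
  have hcard : Multiset.card ((cyclotomic m ℂ).roots) = m.totient := by
    rw [← natDegree_cyclotomic m ℂ]
    exact (splits_iff_card_roots).mp (IsAlgClosed.splits _)
  have hpow : ∀ α : ℂ, ((nthRoots N (1 : ℂ)).map (fun ζ => α - ζ)).prod = α ^ N - 1 := by
    intro α
    have := congrArg (eval α) hsplit
    rw [eval_sub, eval_pow, eval_X, eval_C, eval_multiset_prod, Multiset.map_map] at this
    rw [this]
    exact congrArg Multiset.prod (Multiset.map_congr rfl fun ζ _ => by
      simp [Function.comp])
  have step1 : ∀ ζ : ℂ, (cyclotomic m ℂ).eval ζ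
      = (((cyclotomic m ℂ).roots).map (fun α => ζ - α)).prod := by
    intro ζ
    conv_lhs => rw [hsplit2]
    rw [eval_multiset_prod, Multiset.map_map]
    exact congrArg Multiset.prod (Multiset.map_congr rfl fun α _ => by
      simp [eval_sub, eval_X, eval_C])
  calc ((nthRoots N (1 : ℂ)).map (fun ζ => (cyclotomic m ℂ).eval ζ)).prod
      = ((nthRoots N (1 : ℂ)).map
          (fun ζ => (((cyclotomic m ℂ).roots).map (fun α => ζ - α)).prod)).prod := by
        exact congrArg Multiset.prod (Multiset.map_congr rfl fun ζ _ => step1 ζ)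
    _ = (((cyclotomic m ℂ).roots).map
          (fun α => ((nthRoots N (1 : ℂ)).map (fun ζ => ζ - α)).prod)).prod :=
        Multiset.prod_map_prod_map _ _
    _ = (((cyclotomic m ℂ).roots).map (fun α => (-1 : ℂ) ^ N * (α ^ N - 1))).prod := by
        refine congrArg Multiset.prod (Multiset.map_congr rfl fun α _ => ?_)
        have h1 : ((nthRoots N (1 : ℂ)).map (fun ζ => ζ - α)).prod
            = ((nthRoots N (1 : ℂ)).map (fun ζ => (-1 : ℂ) * (α - ζ))).prod := by
          refine congrArg Multiset.prod (Multiset.map_congr rfl fun ζ _ => by ring)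
        rw [h1, Multiset.prod_map_mul, Multiset.map_const', Multiset.prod_replicate, hcardN,
          hpow α]
    _ = ((-1 : ℂ) ^ N) ^ m.totient *
        ((cyclotomic m ℂ).roots.map (fun α => α ^ N - 1)).prod := by
        rw [Multiset.prod_map_mul, Multiset.map_const', Multiset.prod_replicate, hcard]

lemma roots_pow_perm {m N : ℕ} (hm : 0 < m) (hco : N.Coprime m) :
    ((cyclotomic m ℂ).roots).map (fun α => α ^ N) = (cyclotomic m ℂ).roots := by
  haveI : NeZero (m : ℂ) := ⟨Nat.cast_ne_zero.mpr hm.ne'⟩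
  have hne : cyclotomic m ℂ ≠ 0 := cyclotomic_ne_zero m ℂ
  have hmem : ∀ α : ℂ, α ∈ (cyclotomic m ℂ).roots ↔ IsPrimitiveRoot α m := by
    intro α
    rw [mem_roots hne, isRoot_cyclotomic_iff]
  have hsep : (cyclotomic m ℂ).Separable :=
    Polynomial.Separable.of_dvd
      ((X_pow_sub_one_separable_iff).mpr (NeZero.ne (m : ℂ)))
      (cyclotomic.dvd_X_pow_sub_one m ℂ)
  have hnd := nodup_roots hsep
  have hinj : ∀ α ∈ (cyclotomic m ℂ).roots, ∀ β ∈ (cyclotomic m ℂ).roots,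
      α ^ N = β ^ N → α = β := by
    intro α hα β hβ hab
    rw [hmem] at hα hβ
    rcases eq_or_lt_of_le (Nat.one_le_iff_ne_zero.mpr hm.ne') with hm1 | hm1
    · rw [← pow_one α, ← pow_one β]
      rw [show (1 : ℕ) = m from hm1]
      rw [hα.pow_eq_one, hβ.pow_eq_one]
    · obtain ⟨u, -, hu⟩ := Nat.exists_mul_mod_eq_one_of_coprime hco hm1
      have key : ∀ γ : ℂ, γ ^ m = 1 → γ ^ (N * u) = γ := by
        intro γ hγ
        conv_lhs => rw [← Nat.div_add_mod (N * u) m]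
        rw [pow_add, pow_mul, hγ, one_pow, one_mul, hu, pow_one]
      calc α = α ^ (N * u) := (key α hα.pow_eq_one).symm
        _ = (α ^ N) ^ u := by rw [pow_mul]
        _ = (β ^ N) ^ u := by rw [hab]
        _ = β ^ (N * u) := by rw [pow_mul]
        _ = β := key β hβ.pow_eq_one
  have hle : (((cyclotomic m ℂ).roots).map (fun α => α ^ N)) ≤ (cyclotomic m ℂ).roots := by
    rw [Multiset.le_iff_subset (hnd.map_on hinj)]
    intro x hx
    obtain ⟨α, hα, rfl⟩ := Multiset.mem_map.mp hx
    rw [hmem] at hα ⊢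
    exact hα.pow_of_coprime N hco
  exact Multiset.eq_of_le_of_card_le hle (le_of_eq (Multiset.card_map _ _).symm)

lemma aeval_int {S A : Type*} [CommRing S] [CommRing A] [Algebra S A] (g : Polynomial ℤ)
    (z : A) : aeval z g = aeval z (g.map (Int.castRingHom S)) := by
  rw [aeval_def, aeval_def, eval₂_map,
    show (algebraMap S A).comp (Int.castRingHom S) = algebraMap ℤ A from by
      rw [RingHom.eq_intCast' ((algebraMap S A).comp (Int.castRingHom S)),
        RingHom.eq_intCast' (algebraMap ℤ A)]]

lemma sub_dvd_aeval_sub {S A : Type*} [CommRing S] [CommRing A] [Algebra S A] (a b : A)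
    (g : Polynomial S) : (a - b) ∣ aeval a g - aeval b g := by
  rw [aeval_def, aeval_def, eval₂_eq_eval_map, eval₂_eq_eval_map]
  exact sub_dvd_eval_sub a b _

lemma C_p_dvd_of_map_zero (p : ℕ) [NeZero p] (g : Polynomial ℤ)
    (h : g.map (Int.castRingHom (ZMod p)) = 0) : C (p : ℤ) ∣ g := by
  rw [Polynomial.C_dvd_iff_dvd_coeff]
  intro i
  have h2 := congrArg (fun q => Polynomial.coeff q i) h
  simp only [Polynomial.coeff_map, Polynomial.coeff_zero, Int.coe_castRingHom] at h2
  exact (ZMod.intCast_zmod_eq_zero_iff_dvd _ p).mp h2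

lemma key_congruence (p : ℕ) [hp : Fact p.Prime] (m : ℕ) (hm : 0 < m) (hpm : ¬ p ∣ m)
    (f : Polynomial ℤ) (hmonic : f.Monic)
    (hcong : f.map (Int.castRingHom (ZMod p)) = cyclotomic m (ZMod p)) (n : ℕ) :
    (p : ℤ) ^ (n + 1) ∣
      Algebra.norm ℤ (aeval (root f) ((X : Polynomial ℤ) ^ (p ^ n) - 1)) -
      Algebra.norm ℤ (aeval (root (cyclotomic m ℤ)) ((X : Polynomial ℤ) ^ (p ^ n) - 1)) := by
  haveI : NeZero p := ⟨hp.out.pos.ne'⟩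
  haveI : Fact (1 < p ^ (n + 1)) := ⟨Nat.one_lt_pow (Nat.succ_ne_zero n) hp.out.one_lt⟩
  haveI : NeZero (p ^ (n + 1)) := ⟨pow_ne_zero _ hp.out.pos.ne'⟩
  set k := n + 1 with hk
  set Rk := ZMod (p ^ k) with hRk
  set castk := Int.castRingHom Rk with hcastk
  set Φk := cyclotomic m Rk with hΦk
  set B := AdjoinRoot Φk with hB
  set x : B := root Φk with hx
  -- p is nilpotent in B
  have h_pB0 : (p : B) ^ k = 0 := by
    have h2 : ((p : Rk)) ^ k = 0 := by rw [← Nat.cast_pow, ZMod.natCast_self]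
    rw [show (p : B) = algebraMap Rk B (p : Rk) from (map_natCast (algebraMap Rk B) p).symm,
      ← map_pow, h2, map_zero]
  -- the cyclotomic polynomial vanishes at x
  have hΦ0 : aeval x (cyclotomic m ℤ) = 0 := by
    erw [aeval_int (S := Rk) (A := B), map_cyclotomic, ← hΦk, aeval_eq, mk_self]
  -- f = Φ + C p * h
  obtain ⟨h, hh⟩ : C (p : ℤ) ∣ f - cyclotomic m ℤ := by
    apply C_p_dvd_of_map_zero
    rw [Polynomial.map_sub, hcong, map_cyclotomic, sub_self]
  have hfeq : f = cyclotomic m ℤ + C (p : ℤ) * h := by rw [← hh]; ring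
  have haM : ∀ g : Polynomial ℤ, aeval x (C (p : ℤ) * g) = (p : B) * aeval x g := by
    intro g
    rw [map_mul, aeval_C, show (algebraMap ℤ B) ((p : ℕ) : ℤ) = ((p : ℕ) : B) from by
      rw [eq_intCast, Int.cast_natCast]]
  have hfx : aeval x f = (p : B) * aeval x h := by
    rw [hfeq, map_add, hΦ0, zero_add, haM]
  have hnil_fx : IsNilpotent (aeval x f) := ⟨k, by rw [hfx, mul_pow, h_pB0, zero_mul]⟩
  -- unit of the derivative of the cyclotomic at x
  have hu0 : IsUnit (aeval x (derivative (cyclotomic m ℤ))) := by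
    have hmZ : ((m : ZMod p)) ≠ 0 := by
      rw [Ne, ZMod.natCast_eq_zero_iff]
      exact hpm
    have hsep : (cyclotomic m (ZMod p)).Separable :=
      Polynomial.Separable.of_dvd ((X_pow_sub_one_separable_iff).mpr hmZ)
        (cyclotomic.dvd_X_pow_sub_one m (ZMod p))
    obtain ⟨a, b, hab⟩ := hsep
    obtain ⟨A, hA⟩ := Polynomial.map_surjective (Int.castRingHom (ZMod p)) ZMod.intCast_surjective a
    obtain ⟨B', hB'⟩ := Polynomial.map_surjective (Int.castRingHom (ZMod p)) ZMod.intCast_surjective b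
    obtain ⟨E, hE⟩ : C (p : ℤ) ∣
        A * cyclotomic m ℤ + B' * derivative (cyclotomic m ℤ) - 1 := by
      apply C_p_dvd_of_map_zero
      rw [Polynomial.map_sub, Polynomial.map_add, Polynomial.map_mul, Polynomial.map_mul,
        Polynomial.map_one, hA, hB', map_cyclotomic, ← derivative_map, map_cyclotomic, hab,
        sub_self]
    have h6 : aeval x B' * aeval x (derivative (cyclotomic m ℤ))
        = 1 + (p : B) * aeval x E := by
      have h7 := congrArg (aeval x) (show A * cyclotomic m ℤ + B' * derivative (cyclotomic m ℤ)
          = 1 + C (p : ℤ) * E from by rw [← hE]; ring)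
      rw [map_add, map_add, map_mul, map_mul, hΦ0, mul_zero, zero_add, map_one, haM] at h7
      exact h7
    have h8 : IsUnit (1 + (p : B) * aeval x E) := by
      have h9 : IsNilpotent ((p : B) * aeval x E) :=
        ⟨k, by rw [mul_pow, h_pB0, zero_mul]⟩
      exact IsNilpotent.isUnit_add_left_of_commute h9 isUnit_one (Commute.all _ _)
    exact isUnit_of_mul_isUnit_right (h6 ▸ h8)
  -- unit of the derivative of f at x
  have hux : IsUnit (aeval x (derivative f)) := by
    have h10 : aeval x (derivative f)
        = aeval x (derivative (cyclotomic m ℤ)) + (p : B) * aeval x (derivative h) := by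
      rw [hfeq, derivative_add, derivative_C_mul, map_add, haM]
    rw [h10]
    exact IsNilpotent.isUnit_add_left_of_commute
      ⟨k, by rw [mul_pow, h_pB0, zero_mul]⟩ hu0 (Commute.all _ _)
  -- Newton iteration
  set y : B := f.newtonMap^[k] x with hy
  have hy0 : aeval y f = 0 := by
    have hdvd := Polynomial.aeval_pow_two_pow_dvd_aeval_iterate_newtonMap hnil_fx hux k
    have hz : (aeval x f) ^ 2 ^ k = 0 :=
      pow_eq_zero_of_le (Nat.lt_two_pow_self (n := k)).le
        (by rw [hfx, mul_pow, h_pB0, zero_mul])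
    rw [hz, zero_dvd_iff] at hdvd
    exact hdvd
  have hyx : (p : B) ∣ y - x := by
    have hiter : ∀ j : ℕ, (p : B) ∣ f.newtonMap^[j] x - x := by
      intro j
      induction j with
      | zero => simp
      | succ j ih =>
        rw [Function.iterate_succ', Function.comp_apply]
        set z := f.newtonMap^[j] x with hz
        have h1 : (p : B) ∣ aeval z f := by
          have h2 : (z - x) ∣ (aeval z f - aeval x f) := sub_dvd_aeval_sub z x f
          have h3 : (p : B) ∣ aeval z f - aeval x f := dvd_trans ih h2
          have h4 : (p : B) ∣ aeval x f := hfx ▸ dvd_mul_right _ _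
          have := dvd_add h3 h4
          rwa [sub_add_cancel] at this
        have h5 : f.newtonMap z - x
            = (z - x) - Ring.inverse (aeval z (derivative f)) * aeval z f := by
          rw [Polynomial.newtonMap_apply]; ring
        rw [h5]
        exact dvd_sub ih (Dvd.dvd.mul_left h1 _)
    exact hiter k
  have hyN : y ^ p ^ n = x ^ p ^ n := by
    have hd := dvd_sub_pow_of_dvd_sub hyx n
    rw [show ((p : B)) ^ (n + 1) = 0 from h_pB0] at hd
    rw [← sub_eq_zero]
    exact zero_dvd_iff.mp hd
  -- the algebra equivalence
  set fk := f.map castk with hfk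
  have hfkm : fk.Monic := hmonic.map castk
  have hyfk : aeval y fk = 0 := by rw [← aeval_int]; exact hy0
  set ψ := AdjoinRoot.liftAlgHom fk (Algebra.ofId Rk B) y hyfk with hψ
  have hψroot : ψ (root fk) = y := by rw [hψ]; exact AdjoinRoot.liftAlgHom_root fk _ y hyfk
  have step1 : ∀ z : B, ∃ w c, z = ψ w + (p : B) * c := by
    intro z
    induction z using AdjoinRoot.induction_on with
    | ih q =>
      have h1 : ψ (mk fk q) = aeval y q := by rw [hψ]; exact AdjoinRoot.liftAlgHom_mk fk _ y hyfk q
      have h2 : (x - y) ∣ (aeval x q - aeval y q) := sub_dvd_aeval_sub x y _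
      have h3 : (p : B) ∣ aeval x q - aeval y q :=
        dvd_trans ((dvd_neg).mpr hyx) (by rw [neg_sub]; exact h2)
      obtain ⟨c, hc⟩ := h3
      refine ⟨mk fk q, c, ?_⟩
      rw [h1, ← aeval_eq, show aeval x q = aeval y q + ((p : B) * c) from by
        rw [← hc]; ring]
  have main : ∀ j : ℕ, ∀ z : B, ∃ w c, z = ψ w + (p : B) ^ j * c := by
    intro j
    induction j with
    | zero => intro z; exact ⟨0, z, by simp⟩
    | succ j ih =>
      intro z
      obtain ⟨w, c, rfl⟩ := ih z
      obtain ⟨w', c', rfl⟩ := step1 c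
      refine ⟨w + (p : AdjoinRoot fk) ^ j * w', c', ?_⟩
      rw [map_add, map_mul, map_pow, map_natCast]
      ring
  have hsurj : Function.Surjective ψ := by
    intro z
    obtain ⟨w, c, rfl⟩ := main k z
    rw [h_pB0, zero_mul, add_zero]
    exact ⟨w, rfl⟩
  -- cardinalities
  have hDfk : fk.natDegree = f.natDegree := hmonic.natDegree_map castk
  have hDf : f.natDegree = m.totient := by
    have h1 := hmonic.natDegree_map (Int.castRingHom (ZMod p))
    rw [hcong, natDegree_cyclotomic] at h1
    exact h1.symm
  have hDΦk : Φk.natDegree = m.totient := natDegree_cyclotomic m Rk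
  have e1 : AdjoinRoot fk ≃ (Fin fk.natDegree → Rk) :=
    (AdjoinRoot.powerBasis' hfkm).basis.equivFun.toEquiv
  have e2 : B ≃ (Fin Φk.natDegree → Rk) :=
    (AdjoinRoot.powerBasis' (cyclotomic.monic m Rk)).basis.equivFun.toEquiv
  haveI : Fintype (AdjoinRoot fk) := Fintype.ofEquiv _ e1.symm
  haveI : Fintype B := Fintype.ofEquiv _ e2.symm
  have hcard : Fintype.card (AdjoinRoot fk) = Fintype.card B := by
    rw [Fintype.card_congr e1, Fintype.card_congr e2, Fintype.card_fun, Fintype.card_fun,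
      Fintype.card_fin, Fintype.card_fin, hDfk, hDΦk, hDf]
  have hbij : Function.Bijective ψ :=
    (Fintype.bijective_iff_surjective_and_card ψ).mpr ⟨hsurj, hcard⟩
  have heq : Algebra.norm Rk (aeval (root fk) ((X : Polynomial Rk) ^ (p ^ n) - 1))
      = Algebra.norm Rk (aeval x ((X : Polynomial Rk) ^ (p ^ n) - 1)) := by
    have h1 := Algebra.norm_eq_of_algEquiv (AlgEquiv.ofBijective ψ hbij)
      (aeval (root fk) ((X : Polynomial Rk) ^ (p ^ n) - 1))
    have h2 : (AlgEquiv.ofBijective ψ hbij) (aeval (root fk) ((X : Polynomial Rk) ^ (p ^ n) - 1))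
        = aeval x ((X : Polynomial Rk) ^ (p ^ n) - 1) := by
      have h3 : (AlgEquiv.ofBijective ψ hbij) (aeval (root fk) ((X : Polynomial Rk) ^ (p ^ n) - 1))
          = aeval (ψ (root fk)) ((X : Polynomial Rk) ^ (p ^ n) - 1) := by
        rw [show ((AlgEquiv.ofBijective ψ hbij) (aeval (root fk) ((X : Polynomial Rk) ^ (p ^ n) - 1)))
            = ψ (aeval (root fk) ((X : Polynomial Rk) ^ (p ^ n) - 1)) from rfl]
        exact (Polynomial.aeval_algHom_apply ψ (root fk) _).symm
      rw [h3, hψroot, map_sub, map_sub, map_pow, map_pow, aeval_X, aeval_X, map_one, map_one,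
        hyN]
    rw [← h2, h1]
  -- assemble: reduce the two integer norms mod p^k
  have hmapg : ((X : Polynomial ℤ) ^ (p ^ n) - 1).map castk = (X : Polynomial Rk) ^ (p ^ n) - 1 := by
    rw [Polynomial.map_sub, Polynomial.map_pow, map_X, Polynomial.map_one]
  have hNat1 := norm_map castk hmonic (rfl : f.map castk = fk) ((X : Polynomial ℤ) ^ (p ^ n) - 1)
  have hNat2 := norm_map castk (cyclotomic.monic m ℤ)
    (map_cyclotomic m castk : (cyclotomic m ℤ).map castk = Φk) ((X : Polynomial ℤ) ^ (p ^ n) - 1)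
  rw [hmapg] at hNat1 hNat2
  have hfinal : castk (Algebra.norm ℤ (aeval (root f) ((X : Polynomial ℤ) ^ (p ^ n) - 1)) -
      Algebra.norm ℤ (aeval (root (cyclotomic m ℤ)) ((X : Polynomial ℤ) ^ (p ^ n) - 1))) = 0 := by
    rw [map_sub, hNat1, hNat2, heq, sub_self]
  have := (ZMod.intCast_zmod_eq_zero_iff_dvd _ (p ^ k)).mp hfinal
  rwa [show (((p : ℕ) ^ k : ℕ) : ℤ) = (p : ℤ) ^ (n + 1) from by push_cast; rfl] at this

end CyclicResAux

open CyclicResAux AdjoinRoot in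
/-- Let `p` be prime, `m > 0` with `p ∤ m`, and `f ∈ ℤ[t]` monic with
`f ≡ Φ_m (mod p)`. Then `Res(t^{p^n} − 1, f) → Φ_m(1)` in `ℤ_p`; explicitly `Φ_m(1) = q` if
`m = q^e` is a prime power (`e ≥ 1`) and `Φ_m(1) = 1` if `m > 1` is not a prime power. -/
theorem padic_limit_of_cyclic_resultants_of_cyclotomic_congruent
    (p : ℕ) [hp : Fact p.Prime]
    (m : ℕ) (hm : 0 < m) (hpm : ¬ p ∣ m)
    (f : Polynomial ℤ) (hmonic : f.Monic)
    (hcong : f.map (Int.castRingHom (ZMod p)) = Polynomial.cyclotomic m (ZMod p))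
    (R : ℕ → ℤ) (hR : ∀ n, ((R n : ℤ) : ℂ) = cyclicResultantC (p ^ n) f) :
    Tendsto (fun n => ((R n : ℤ_[p]))) atTop
      (𝓝 (((Polynomial.cyclotomic m ℤ).eval 1 : ℤ) : ℤ_[p])) ∧
    (∀ q e : ℕ, q.Prime → 1 ≤ e → m = q ^ e → (Polynomial.cyclotomic m ℤ).eval 1 = q) ∧
    (1 < m → ¬ (∃ q e : ℕ, q.Prime ∧ 1 ≤ e ∧ m = q ^ e) →
      (Polynomial.cyclotomic m ℤ).eval 1 = 1) := by
  have hDf : f.natDegree = m.totient := by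
    have h1 := hmonic.natDegree_map (Int.castRingHom (ZMod p))
    rw [hcong, natDegree_cyclotomic] at h1
    exact h1.symm
  have hsqC : ∀ t : ℕ, ((-1 : ℂ)) ^ t * ((-1 : ℂ)) ^ t = 1 := fun t => by
    rw [← pow_add, ← two_mul, pow_mul]; norm_num
  have hsqZ : ∀ t : ℕ, ((-1 : ℤ)) ^ t * ((-1 : ℤ)) ^ t = 1 := fun t => by
    rw [← pow_add, ← two_mul, pow_mul]; norm_num
  have hNpos : ∀ n : ℕ, 0 < p ^ n := fun n => pow_pos hp.out.pos n
  -- Fact 1 : R n in terms of the norm over ℤ[x]/(f)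
  have hF1 : ∀ n : ℕ, R n = (-1) ^ (p ^ n * f.natDegree) *
      Algebra.norm ℤ (aeval (root f) ((X : Polynomial ℤ) ^ (p ^ n) - 1)) := by
    intro n
    apply Int.cast_injective (α := ℂ)
    push_cast
    rw [hR n]
    have h1 := norm_map (Int.castRingHom ℂ) hmonic
      (rfl : f.map (Int.castRingHom ℂ) = f.map (Int.castRingHom ℂ))
      ((X : Polynomial ℤ) ^ (p ^ n) - 1)
    rw [show ((X : Polynomial ℤ) ^ (p ^ n) - 1).map (Int.castRingHom ℂ)
        = (X : Polynomial ℂ) ^ (p ^ n) - 1 from by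
      rw [Polynomial.map_sub, Polynomial.map_pow, map_X, Polynomial.map_one]] at h1
    have h2 := normC (hmonic.map (Int.castRingHom ℂ)) (hNpos n)
    have h3 : (f.map (Int.castRingHom ℂ)).natDegree = f.natDegree :=
      hmonic.natDegree_map _
    have h4 : ∀ ζ : ℂ, (f.map (Int.castRingHom ℂ)).eval ζ = aeval ζ f := fun ζ => by
      rw [aeval_def, eval₂_eq_eval_map, algebraMap_int_eq]
    have h5 : ((nthRoots (p ^ n) (1 : ℂ)).map
        (fun ζ => (f.map (Int.castRingHom ℂ)).eval ζ)).prod = cyclicResultantC (p ^ n) f := by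
      unfold cyclicResultantC
      exact congrArg Multiset.prod (Multiset.map_congr rfl fun ζ _ => h4 ζ)
    have h6 : ((Algebra.norm ℤ (aeval (root f) ((X : Polynomial ℤ) ^ (p ^ n) - 1)) : ℤ) : ℂ)
        = ((-1 : ℂ) ^ f.natDegree) ^ (p ^ n) * cyclicResultantC (p ^ n) f := by
      rw [show ((Algebra.norm ℤ (aeval (root f) ((X : Polynomial ℤ) ^ (p ^ n) - 1)) : ℤ) : ℂ)
          = (Int.castRingHom ℂ) (Algebra.norm ℤ
              (aeval (root f) ((X : Polynomial ℤ) ^ (p ^ n) - 1))) from rfl,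
        h1, h2, h3, h5]
    rw [h6]
    rw [← mul_assoc, show ((-1 : ℂ)) ^ (p ^ n * f.natDegree) * ((-1 : ℂ) ^ f.natDegree) ^ (p ^ n)
        = 1 from by rw [← pow_mul, mul_comm (f.natDegree)]; exact hsqC _, one_mul]
  -- Fact 2 : the norm for the cyclotomic polynomial is constant
  have hF2 : ∀ n : ℕ, Algebra.norm ℤ
      (aeval (root (cyclotomic m ℤ)) ((X : Polynomial ℤ) ^ (p ^ n) - 1))
      = (-1) ^ m.totient * (cyclotomic m ℤ).eval 1 := by
    intro n
    have hco : (p ^ n).Coprime m := (hp.out.coprime_iff_not_dvd.mpr hpm).pow_left n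
    apply Int.cast_injective (α := ℂ)
    push_cast
    have h1 := norm_map (Int.castRingHom ℂ) (cyclotomic.monic m ℤ)
      (map_cyclotomic m (Int.castRingHom ℂ)) ((X : Polynomial ℤ) ^ (p ^ n) - 1)
    rw [show ((X : Polynomial ℤ) ^ (p ^ n) - 1).map (Int.castRingHom ℂ)
        = (X : Polynomial ℂ) ^ (p ^ n) - 1 from by
      rw [Polynomial.map_sub, Polynomial.map_pow, map_X, Polynomial.map_one]] at h1
    have h2 := normC (cyclotomic.monic m ℂ) (hNpos n)
    have h3 : (cyclotomic m ℂ).natDegree = m.totient := natDegree_cyclotomic m ℂ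
    have h4 := prod_eval_eq (m := m) (hNpos n)
    have hperm := roots_pow_perm hm hco
    have h5 : ((cyclotomic m ℂ).roots.map (fun α => α ^ (p ^ n) - 1)).prod
        = ((cyclotomic m ℂ).roots.map (fun α => α - 1)).prod := by
      conv_rhs => rw [← hperm, Multiset.map_map]
      rfl
    -- relate the product of (α - 1) to the evaluation at 1
    have hsplit2 : cyclotomic m ℂ = ((cyclotomic m ℂ).roots.map (fun α => X - C α)).prod :=
      (IsAlgClosed.splits _).eq_prod_roots_of_monic (cyclotomic.monic m ℂ)
    have hcard : Multiset.card ((cyclotomic m ℂ).roots) = m.totient := by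
      rw [← natDegree_cyclotomic m ℂ]
      exact (splits_iff_card_roots).mp (IsAlgClosed.splits _)
    have h6 : (cyclotomic m ℂ).eval 1
        = ((cyclotomic m ℂ).roots.map (fun α => 1 - α)).prod := by
      conv_lhs => rw [hsplit2]
      rw [eval_multiset_prod, Multiset.map_map]
      exact congrArg Multiset.prod (Multiset.map_congr rfl fun α _ => by
        simp [Function.comp])
    have h7 : ((cyclotomic m ℂ).roots.map (fun α => α - 1)).prod
        = (-1 : ℂ) ^ m.totient * (cyclotomic m ℂ).eval 1 := by
      have h8 : ((cyclotomic m ℂ).roots.map (fun α => α - 1)).prod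
          = ((cyclotomic m ℂ).roots.map (fun α => (-1 : ℂ) * (1 - α))).prod :=
        congrArg Multiset.prod (Multiset.map_congr rfl fun α _ => by ring)
      rw [h8, Multiset.prod_map_mul, Multiset.map_const', Multiset.prod_replicate, hcard, ← h6]
    have h9 : (cyclotomic m ℂ).eval 1 = (((cyclotomic m ℤ).eval 1 : ℤ) : ℂ) := by
      rw [← map_cyclotomic m (Int.castRingHom ℂ), eval_map, eval₂_at_one]
      rfl
    rw [show ((Algebra.norm ℤ (aeval (root (cyclotomic m ℤ))
          ((X : Polynomial ℤ) ^ (p ^ n) - 1)) : ℤ) : ℂ)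
        = (Int.castRingHom ℂ) (Algebra.norm ℤ (aeval (root (cyclotomic m ℤ))
            ((X : Polynomial ℤ) ^ (p ^ n) - 1))) from rfl, h1, h2, h3, h4, h5, h7, h9]
    rw [← mul_assoc, ← mul_assoc,
      show ((-1 : ℂ) ^ m.totient) ^ (p ^ n) * ((-1 : ℂ) ^ (p ^ n)) ^ m.totient = 1 from by
        rw [← pow_mul, ← pow_mul, mul_comm (m.totient)]; exact hsqC _, one_mul]
  -- Fact 4 : the key divisibility for R n
  have hkey : ∀ n : ℕ, (p : ℤ) ^ (n + 1) ∣ R n - (cyclotomic m ℤ).eval 1 := by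
    intro n
    have hsign : ((-1 : ℤ)) ^ m.totient * (cyclotomic m ℤ).eval 1
        = (-1) ^ (p ^ n * f.natDegree) * (cyclotomic m ℤ).eval 1 := by
      rcases Nat.even_or_odd m.totient with he | ho
      · rw [hDf, he.neg_one_pow, (he.mul_left (p ^ n)).neg_one_pow]
      · have hm12 : m = 1 ∨ m = 2 := by
          by_contra hcon
          push_neg at hcon
          have h2m : 2 < m := by omega
          exact (Nat.not_odd_iff_even.mpr (Nat.totient_even h2m)) ho
        rcases hm12 with rfl | rfl
        · simp [cyclotomic_one]
        · have hp2 : p ≠ 2 := fun hp2 => hpm (by rw [hp2])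
          have hodd : Odd (p ^ n) := (hp.out.odd_of_ne_two hp2).pow
          rw [hDf, ho.neg_one_pow, (hodd.mul ho).neg_one_pow]
    have h3 := key_congruence p m hm hpm f hmonic hcong n
    have h4 : R n - (cyclotomic m ℤ).eval 1 = (-1) ^ (p ^ n * f.natDegree) *
        (Algebra.norm ℤ (aeval (root f) ((X : Polynomial ℤ) ^ (p ^ n) - 1)) -
         Algebra.norm ℤ (aeval (root (cyclotomic m ℤ)) ((X : Polynomial ℤ) ^ (p ^ n) - 1))) := by
      rw [mul_sub, ← hF1 n, hF2 n, hsign, ← mul_assoc, hsqZ, one_mul]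
    rw [h4]
    exact Dvd.dvd.mul_left h3 _
  refine ⟨?_, ?_, ?_⟩
  · -- the p-adic limit
    have hbound : ∀ n : ℕ, dist ((R n : ℤ_[p]))
        (((cyclotomic m ℤ).eval 1 : ℤ) : ℤ_[p]) ≤ ((p : ℝ)⁻¹) ^ (n + 1) := by
      intro n
      rw [dist_eq_norm, show ((R n : ℤ_[p]) - (((cyclotomic m ℤ).eval 1 : ℤ) : ℤ_[p]))
          = (((R n - (cyclotomic m ℤ).eval 1 : ℤ)) : ℤ_[p]) from by push_cast; ring]
      have h1 := (PadicInt.norm_int_le_pow_iff_dvd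
        (k := R n - (cyclotomic m ℤ).eval 1) (n := n + 1)).mpr (hkey n)
      rwa [zpow_neg, zpow_natCast, ← inv_pow] at h1
    have h0 : Tendsto (fun j : ℕ => ((p : ℝ)⁻¹) ^ j) atTop (𝓝 0) := by
      apply tendsto_pow_atTop_nhds_zero_of_lt_one (by positivity)
      rw [inv_lt_one_iff₀]
      right
      exact_mod_cast hp.out.one_lt
    have h1 : Tendsto (fun n : ℕ => ((p : ℝ)⁻¹) ^ (n + 1)) atTop (𝓝 0) :=
      (Filter.tendsto_add_atTop_iff_nat 1).mpr h0
    rw [tendsto_iff_dist_tendsto_zero]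
    exact squeeze_zero (fun n => dist_nonneg) hbound h1
  · intro q e hq he hme
    obtain ⟨e', rfl⟩ : ∃ e', e = e' + 1 := ⟨e - 1, (Nat.succ_pred_eq_of_pos he).symm⟩
    haveI := Fact.mk hq
    subst hme
    exact Polynomial.eval_one_cyclotomic_prime_pow e'
  · intro h1m h2
    apply Polynomial.eval_one_cyclotomic_not_prime_pow
    intro P hP k
    match k with
    | 0 => simpa using h1m.ne
    | (k + 1) => exact fun heq => h2 ⟨P, k + 1, hP, Nat.succ_le_succ (Nat.zero_le _), heq.symm⟩
end

section
/- Let p be a prime number and m a nonzero integer with p ∣ m, and set f(t) = m·t^2 + (1 − 2m)·t + m. Then the sequence (Res(t^{p^n} − 1, f(t)))_{n≥0} converges in ℤ_p, with limit equal to −1 if p = 2 and equal to 1 if p is odd. -/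
open Filter Topology Polynomial

/-- Integer Lucas sequence `V n = A^n + B^n` for roots of `x² - (2m-1)x + m²`. -/
def Vseq (m : ℤ) : ℕ → ℤ
  | 0 => 2
  | 1 => 2 * m - 1
  | (n + 2) => (2 * m - 1) * Vseq m (n + 1) - m ^ 2 * Vseq m n

lemma Vseq_cast {S : Type*} [CommRing S] (m : ℤ) (A B : S)
    (hs : A + B = 2 * (m : S) - 1) (hp : A * B = (m : S) ^ 2) :
    ∀ n, ((Vseq m n : ℤ) : S) = A ^ n + B ^ n := by
  intro n
  induction n using Nat.twoStepInduction with
  | zero => simp [Vseq]; norm_num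
  | one =>
    show ((2 * m - 1 : ℤ) : S) = A ^ 1 + B ^ 1
    push_cast
    rw [pow_one, pow_one, hs]
  | more n ih1 ih2 =>
    have h : ((Vseq m (n + 2) : ℤ) : S)
        = (2 * (m : S) - 1) * ((Vseq m (n + 1) : ℤ) : S)
          - (m : S) ^ 2 * ((Vseq m n : ℤ) : S) := by
      show ((((2 * m - 1) * Vseq m (n + 1) - m ^ 2 * Vseq m n : ℤ)) : S) = _
      push_cast; ring
    rw [h, ih2, ih1, ← hs, ← hp]; ring

lemma cyclicResultantC_eq (m : ℤ) (hm : m ≠ 0) (f : Polynomial ℤ)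
    (hf : f = Polynomial.C m * Polynomial.X ^ 2 + Polynomial.C (1 - 2 * m) * Polynomial.X +
      Polynomial.C m)
    (N : ℕ) (hN : N ≠ 0) :
    cyclicResultantC N f = ((2 * m ^ N - Vseq m N : ℤ) : ℂ) := by
  have hmC : (m : ℂ) ≠ 0 := Int.cast_ne_zero.mpr hm
  obtain ⟨d, hd⟩ : ∃ d : ℂ, d ^ 2 = (2 * (m : ℂ) - 1) ^ 2 - 4 * (m : ℂ) ^ 2 := by
    exact IsAlgClosed.exists_pow_nat_eq _ (by norm_num)
  set A : ℂ := ((2 * (m : ℂ) - 1) + d) / 2 with hA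
  set B : ℂ := ((2 * (m : ℂ) - 1) - d) / 2 with hB
  have hs : A + B = 2 * (m : ℂ) - 1 := by rw [hA, hB]; ring
  have hp : A * B = (m : ℂ) ^ 2 := by rw [hA, hB]; linear_combination (-1/4 : ℂ) * hd
  set α : ℂ := A / m with hα
  set β : ℂ := B / m with hβ
  have hval : ∀ z : ℂ, Polynomial.aeval z f = (m : ℂ) * ((z - α) * (z - β)) := by
    intro z
    rw [hf]
    simp only [map_add, map_mul, map_pow, aeval_X, aeval_C]
    simp only [algebraMap_int_eq, eq_intCast]
    push_cast
    rw [hα, hβ]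
    field_simp
    linear_combination (2 * (m:ℂ) * z - (m:ℂ)^2 - (m:ℂ) * z^2) * hs
      + (m:ℂ) * hp + ((m:ℂ)/2) * hd + ((1 - (m:ℂ))/4) * hd
  -- the product of (x - ζ) over N-th roots of unity
  have hcard : Multiset.card (Polynomial.nthRoots N (1 : ℂ)) = N := by
    unfold Polynomial.nthRoots
    rw [(Polynomial.splits_iff_card_roots.mp (IsAlgClosed.splits _)),
      Polynomial.natDegree_X_pow_sub_C]
  have hmonic : (Polynomial.X ^ N - Polynomial.C (1 : ℂ)).Monic :=
    Polynomial.monic_X_pow_sub_C 1 hN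
  have hfactor := (IsAlgClosed.splits (Polynomial.X ^ N - Polynomial.C (1 : ℂ))).eq_prod_roots_of_monic
    hmonic
  have hprod : ∀ x : ℂ,
      ((Polynomial.nthRoots N (1 : ℂ)).map (fun ζ => x - ζ)).prod = x ^ N - 1 := by
    intro x
    have h1 : x ^ N - 1 = Polynomial.eval x (Polynomial.X ^ N - Polynomial.C (1 : ℂ)) := by
      simp
    rw [h1, hfactor, Polynomial.eval_multiset_prod, Multiset.map_map]
    unfold Polynomial.nthRoots
    congr 1
    apply Multiset.map_congr rfl
    intro ζ _
    simp
  have hshift : ∀ x : ℂ,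
      ((Polynomial.nthRoots N (1 : ℂ)).map (fun ζ => ζ - x)).prod
        = (-1 : ℂ) ^ N * (x ^ N - 1) := by
    intro x
    have h1 : (fun ζ : ℂ => ζ - x) = fun ζ : ℂ => (-1 : ℂ) * (x - ζ) := by
      funext ζ; ring
    rw [h1, Multiset.prod_map_mul, ← hprod x]
    congr 1
    rw [Multiset.map_const', Multiset.prod_replicate, hcard]
  have hmain : cyclicResultantC N f
      = (m : ℂ) ^ N * (((-1 : ℂ) ^ N * (α ^ N - 1)) * ((-1 : ℂ) ^ N * (β ^ N - 1))) := by
    unfold cyclicResultantC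
    have h1 : (fun ζ : ℂ => Polynomial.aeval ζ f)
        = fun ζ : ℂ => (m : ℂ) * ((ζ - α) * (ζ - β)) := funext hval
    rw [h1, Multiset.prod_map_mul, Multiset.map_const', Multiset.prod_replicate, hcard,
      Multiset.prod_map_mul, hshift, hshift]
  have hABN : A ^ N * B ^ N = ((m : ℂ) ^ 2) ^ N := by rw [← mul_pow, hp]
  have hαA : α ^ N = A ^ N / (m : ℂ) ^ N := by rw [hα, div_pow]
  have hβB : β ^ N = B ^ N / (m : ℂ) ^ N := by rw [hβ, div_pow]
  have hmN : (m : ℂ) ^ N ≠ 0 := pow_ne_zero _ hmC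
  have hVC : ((Vseq m N : ℤ) : ℂ) = A ^ N + B ^ N := Vseq_cast m A B hs hp N
  have e1 : (m : ℂ) ^ N * (α ^ N - 1) = A ^ N - (m : ℂ) ^ N := by
    rw [hαA]; field_simp
  have e2 : (m : ℂ) ^ N * (β ^ N - 1) = B ^ N - (m : ℂ) ^ N := by
    rw [hβB]; field_simp
  have hneg : ((-1 : ℂ) ^ N) * ((-1 : ℂ) ^ N) = 1 := by
    rw [← mul_pow]; norm_num
  have hgoal : (m : ℂ) ^ N * ((m : ℂ) ^ N *
        (((-1 : ℂ) ^ N * (α ^ N - 1)) * ((-1 : ℂ) ^ N * (β ^ N - 1))))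
      = (m : ℂ) ^ N * (2 * (m : ℂ) ^ N - (A ^ N + B ^ N)) := by
    linear_combination ((-1 : ℂ) ^ N * (-1 : ℂ) ^ N * ((m : ℂ) ^ N * (β ^ N - 1))) * e1
      + ((-1 : ℂ) ^ N * (-1 : ℂ) ^ N * (A ^ N - (m : ℂ) ^ N)) * e2
      + ((A ^ N - (m : ℂ) ^ N) * (B ^ N - (m : ℂ) ^ N)) * hneg + hABN
  rw [hmain, mul_left_cancel₀ hmN hgoal]
  push_cast
  rw [hVC]

lemma padic_norm_le_inv_of_lt_one {p : ℕ} [Fact p.Prime] {x : ℤ_[p]} (h : ‖x‖ < 1) :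
    ‖x‖ ≤ (p : ℝ)⁻¹ := by
  obtain ⟨y, hy⟩ := (PadicInt.norm_lt_one_iff_dvd x).mp h
  rw [hy, norm_mul, PadicInt.norm_p]
  calc (p : ℝ)⁻¹ * ‖y‖ ≤ (p : ℝ)⁻¹ * 1 := by
        gcongr
        exact PadicInt.norm_le_one y
    _ = (p : ℝ)⁻¹ := mul_one _

lemma padic_pow_p_contract {p : ℕ} [Fact p.Prime] (c : ℤ_[p]) (hc : ‖c - 1‖ ≤ (p : ℝ)⁻¹) :
    ‖c ^ p - 1‖ ≤ (p : ℝ)⁻¹ * ‖c - 1‖ := by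
  have hplt : (p : ℝ)⁻¹ < 1 := by
    rw [inv_lt_one_iff₀]
    right
    exact_mod_cast (Fact.out : p.Prime).one_lt
  have hc1 : ‖c - 1‖ < 1 := lt_of_le_of_lt hc hplt
  have hdvd1 : (p : ℤ_[p]) ∣ c - 1 := (PadicInt.norm_lt_one_iff_dvd _).mp hc1
  have hdvdS : (p : ℤ_[p]) ∣ ∑ i ∈ Finset.range p, c ^ i := by
    have h1 : (∑ i ∈ Finset.range p, c ^ i) - (p : ℤ_[p])
        = ∑ i ∈ Finset.range p, (c ^ i - 1) := by
      rw [Finset.sum_sub_distrib]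
      simp
    have h2 : (p : ℤ_[p]) ∣ (∑ i ∈ Finset.range p, c ^ i) - (p : ℤ_[p]) := by
      rw [h1]
      refine Finset.dvd_sum fun i _ => hdvd1.trans ?_
      simpa using sub_dvd_pow_sub_pow c 1 i
    have := dvd_add h2 (dvd_refl (p : ℤ_[p]))
    simpa using this
  obtain ⟨u, hu⟩ := hdvdS
  have hS : ‖∑ i ∈ Finset.range p, c ^ i‖ ≤ (p : ℝ)⁻¹ := by
    rw [hu, norm_mul, PadicInt.norm_p]
    calc (p : ℝ)⁻¹ * ‖u‖ ≤ (p : ℝ)⁻¹ * 1 := by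
          gcongr
          exact PadicInt.norm_le_one u
      _ = (p : ℝ)⁻¹ := mul_one _
  calc ‖c ^ p - 1‖ = ‖(∑ i ∈ Finset.range p, c ^ i) * (c - 1)‖ := by rw [geom_sum_mul]
    _ = ‖∑ i ∈ Finset.range p, c ^ i‖ * ‖c - 1‖ := norm_mul _ _
    _ ≤ (p : ℝ)⁻¹ * ‖c - 1‖ := by gcongr

lemma padic_pow_pow_tendsto_one {p : ℕ} [Fact p.Prime] (c : ℤ_[p]) (hc : ‖c - 1‖ < 1) :
    Tendsto (fun n => c ^ (p ^ n)) atTop (𝓝 1) := by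
  have hple : ‖c - 1‖ ≤ (p : ℝ)⁻¹ := padic_norm_le_inv_of_lt_one hc
  have hp0 : (0 : ℝ) ≤ (p : ℝ)⁻¹ := by positivity
  have hplt : (p : ℝ)⁻¹ < 1 := by
    rw [inv_lt_one_iff₀]
    right
    exact_mod_cast (Fact.out : p.Prime).one_lt
  have hbound : ∀ n, ‖c ^ (p ^ n) - 1‖ ≤ (p : ℝ)⁻¹ ^ n * (p : ℝ)⁻¹ := by
    intro n
    induction n with
    | zero => simpa using hple
    | succ n ih =>
      have h1 : ‖c ^ (p ^ n) - 1‖ ≤ (p : ℝ)⁻¹ := by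
        refine le_trans ih ?_
        calc (p : ℝ)⁻¹ ^ n * (p : ℝ)⁻¹ ≤ 1 * (p : ℝ)⁻¹ := by
              gcongr
              exact pow_le_one₀ hp0 hplt.le
          _ = (p : ℝ)⁻¹ := one_mul _
      have h2 := padic_pow_p_contract (c ^ (p ^ n)) h1
      calc ‖c ^ (p ^ (n + 1)) - 1‖ = ‖(c ^ (p ^ n)) ^ p - 1‖ := by
            rw [← pow_mul, pow_succ]
        _ ≤ (p : ℝ)⁻¹ * ‖c ^ (p ^ n) - 1‖ := h2
        _ ≤ (p : ℝ)⁻¹ * ((p : ℝ)⁻¹ ^ n * (p : ℝ)⁻¹) := by gcongr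
        _ = (p : ℝ)⁻¹ ^ (n + 1) * (p : ℝ)⁻¹ := by ring
  rw [tendsto_iff_norm_sub_tendsto_zero]
  refine squeeze_zero (fun n => norm_nonneg _) hbound ?_
  have : Tendsto (fun n : ℕ => (p : ℝ)⁻¹ ^ n) atTop (𝓝 0) :=
    tendsto_pow_atTop_nhds_zero_of_lt_one hp0 hplt
  simpa using this.mul_const ((p : ℝ)⁻¹)

/-- Let `p` be prime and `m ≠ 0` with `p ∣ m`, and let
`f(t) = m·t² + (1 − 2m)·t + m` (the Alexander polynomial of the twist knot `J(2,2m)`). Then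
`Res(t^{p^n} − 1, f) → −1` in `ℤ_p` if `p = 2`, and `→ 1` if `p` is odd. -/
theorem twist_knot_cyclic_resultants
    (p : ℕ) [hp : Fact p.Prime] (m : ℤ) (hm : m ≠ 0) (hpm : (p : ℤ) ∣ m)
    (f : Polynomial ℤ)
    (hf : f = Polynomial.C m * Polynomial.X ^ 2 + Polynomial.C (1 - 2 * m) * Polynomial.X +
      Polynomial.C m)
    (R : ℕ → ℤ) (hR : ∀ n, ((R n : ℤ) : ℂ) = cyclicResultantC (p ^ n) f) :
    Tendsto (fun n => ((R n : ℤ_[p]))) atTop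
      (𝓝 (if p = 2 then (-1 : ℤ_[p]) else 1)) := by
  have hp1 : 1 < p := hp.out.one_lt
  -- Step 1: the integer formula for R.
  have hRint : ∀ n, R n = 2 * m ^ (p ^ n) - Vseq m (p ^ n) := by
    intro n
    have h1 := (hR n).trans
      (cyclicResultantC_eq m hm f hf (p ^ n) (pow_ne_zero n (by omega)))
    exact_mod_cast h1
  -- Step 2: Hensel root in ℤ_p.
  set g : Polynomial ℤ_[p] :=
    Polynomial.X ^ 2 - Polynomial.C ((2 * m - 1 : ℤ) : ℤ_[p]) * Polynomial.X +
      Polynomial.C (((m : ℤ) : ℤ_[p]) ^ 2) with hg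
  have hmnorm : ‖((m : ℤ) : ℤ_[p])‖ < 1 := (PadicInt.norm_int_lt_one_iff_dvd m).mpr hpm
  have heval : g.eval (-1) = ((m : ℤ) : ℤ_[p]) * (((m : ℤ) : ℤ_[p]) + 2) := by
    rw [hg]
    simp only [Polynomial.eval_add, Polynomial.eval_sub, Polynomial.eval_pow,
      Polynomial.eval_mul, Polynomial.eval_X, Polynomial.eval_C]
    push_cast
    ring
  have hderiv : g.derivative.eval (-1) = -((2 * m + 1 : ℤ) : ℤ_[p]) := by
    rw [hg]
    simp only [Polynomial.derivative_add, Polynomial.derivative_sub,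
      Polynomial.derivative_pow, Polynomial.derivative_mul, Polynomial.derivative_C,
      Polynomial.derivative_X, Polynomial.eval_add, Polynomial.eval_sub, Polynomial.eval_mul,
      Polynomial.eval_pow, Polynomial.eval_X, Polynomial.eval_C, Polynomial.eval_one,
      Polynomial.eval_zero]
    push_cast
    ring
  have hderivnorm : ‖g.derivative.eval (-1)‖ = 1 := by
    rw [hderiv, norm_neg]
    refine le_antisymm (PadicInt.norm_le_one _) (not_lt.mp fun hlt => ?_)
    have := (PadicInt.norm_int_lt_one_iff_dvd _).mp hlt
    have h1 : (p : ℤ) ∣ 1 := by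
      have := dvd_sub this (Dvd.dvd.mul_left hpm 2)
      simpa using this
    have := Int.le_of_dvd one_pos h1
    omega
  have hnorm : ‖g.eval (-1)‖ < ‖g.derivative.eval (-1)‖ ^ 2 := by
    rw [hderivnorm, heval, one_pow, norm_mul]
    calc ‖((m : ℤ) : ℤ_[p])‖ * ‖((m : ℤ) : ℤ_[p]) + 2‖ ≤ ‖((m : ℤ) : ℤ_[p])‖ * 1 := by
          gcongr
          exact PadicInt.norm_le_one _
      _ = ‖((m : ℤ) : ℤ_[p])‖ := mul_one _
      _ < 1 := hmnorm
  obtain ⟨b, hb0, hb1, -, -⟩ := hensels_lemma hnorm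
  simp only [Polynomial.coe_aeval_eq_eval] at hb1
  rw [hderivnorm] at hb1
  -- The two roots in ℤ_p.
  set a : ℤ_[p] := ((2 * m - 1 : ℤ) : ℤ_[p]) - b with ha
  have hb0' : b ^ 2 - ((2 * m - 1 : ℤ) : ℤ_[p]) * b + ((m : ℤ) : ℤ_[p]) ^ 2 = 0 := by
    have := hb0
    rw [hg] at this
    simpa using this
  have hsum : a + b = 2 * ((m : ℤ) : ℤ_[p]) - 1 := by
    rw [ha]; push_cast; ring
  have hprod : a * b = ((m : ℤ) : ℤ_[p]) ^ 2 := by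
    rw [ha]
    linear_combination -hb0'
  have hb1' : ‖b + 1‖ < 1 := by
    have : b - (-1) = b + 1 := by ring
    rwa [this] at hb1
  have hanorm : ‖a‖ < 1 := by
    have h2m : ‖(2 : ℤ_[p]) * ((m : ℤ) : ℤ_[p])‖ < 1 := by
      rw [norm_mul]
      calc ‖(2 : ℤ_[p])‖ * ‖((m : ℤ) : ℤ_[p])‖ ≤ 1 * ‖((m : ℤ) : ℤ_[p])‖ := by
            gcongr
            exact PadicInt.norm_le_one _
        _ = ‖((m : ℤ) : ℤ_[p])‖ := one_mul _
        _ < 1 := hmnorm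
    have hrepr : a = 2 * ((m : ℤ) : ℤ_[p]) + (-(b + 1)) := by
      rw [ha]; push_cast; ring
    rw [hrepr]
    calc ‖2 * ((m : ℤ) : ℤ_[p]) + (-(b + 1))‖
        ≤ max ‖2 * ((m : ℤ) : ℤ_[p])‖ ‖-(b + 1)‖ := PadicInt.nonarchimedean _ _
      _ < 1 := by
          rw [norm_neg]
          exact max_lt h2m hb1'
  -- R in ℤ_p.
  have hRp : ∀ n, ((R n : ℤ_[p]))
      = 2 * ((m : ℤ) : ℤ_[p]) ^ (p ^ n) - (a ^ (p ^ n) + b ^ (p ^ n)) := by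
    intro n
    have hV := Vseq_cast m a b hsum hprod (p ^ n)
    rw [hRint n]
    push_cast
    rw [hV]
  -- Limits.
  have hppow : Tendsto (fun n : ℕ => p ^ n) atTop atTop :=
    tendsto_pow_atTop_atTop_of_one_lt hp1
  have t1 : Tendsto (fun n => ((m : ℤ) : ℤ_[p]) ^ (p ^ n)) atTop (𝓝 0) :=
    (tendsto_pow_atTop_nhds_zero_of_norm_lt_one hmnorm).comp hppow
  have t2 : Tendsto (fun n => a ^ (p ^ n)) atTop (𝓝 0) :=
    (tendsto_pow_atTop_nhds_zero_of_norm_lt_one hanorm).comp hppow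
  have hc : ‖(-b) - 1‖ < 1 := by
    have : (-b) - 1 = -(b + 1) := by ring
    rwa [this, norm_neg]
  have t3 : Tendsto (fun n => (-b) ^ (p ^ n)) atTop (𝓝 1) :=
    padic_pow_pow_tendsto_one (-b) hc
  have t4 : Tendsto (fun n => b ^ (p ^ n)) atTop
      (𝓝 (if p = 2 then (1 : ℤ_[p]) else -1)) := by
    by_cases hp2 : p = 2
    · rw [if_pos hp2]
      refine t3.congr' ?_
      filter_upwards [eventually_ge_atTop 1] with n hn
      have heven : Even (p ^ n) := by
        rw [hp2]
        exact Nat.even_pow.mpr ⟨even_two, by omega⟩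
      rw [neg_pow, heven.neg_one_pow, one_mul]
    · rw [if_neg hp2]
      have hodd : ∀ n : ℕ, Odd (p ^ n) := fun n => (hp.out.odd_of_ne_two hp2).pow
      have : ∀ n, b ^ (p ^ n) = -((-b) ^ (p ^ n)) := by
        intro n
        rw [neg_pow, (hodd n).neg_one_pow]
        ring
      rw [show (fun n => b ^ (p ^ n)) = fun n => -((-b) ^ (p ^ n)) from funext this]
      simpa using t3.neg
  have tall : Tendsto (fun n => ((R n : ℤ_[p]))) atTop
      (𝓝 (2 * 0 - (0 + (if p = 2 then (1 : ℤ_[p]) else -1)))) := by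
    rw [show (fun n => ((R n : ℤ_[p]))) = fun n =>
      2 * ((m : ℤ) : ℤ_[p]) ^ (p ^ n) - (a ^ (p ^ n) + b ^ (p ^ n)) from funext hRp]
    exact ((t1.const_mul 2).sub (t2.add t4))
  refine tall.congr' (Eventually.of_forall fun n => rfl) |>.mono_right (le_of_eq ?_)
  congr 1
  by_cases hp2 : p = 2 <;> simp [hp2]
end

section
/- Let l ≥ 5 be a prime number and let a be an integer with a^2 ≤ 4l (Hasse's bound), and set f(t) = t^2 − a·t + l. Then the limit lim_{n→∞} Res(t^{l^n} − 1, f(t)) exists in ℤ_l, and this limit equals 1 if and only if a = 0. -/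
open Filter Topology Polynomial

/-!
Over `ℂ`, `Res(t^N − 1, f) = (α^N − 1)(β^N − 1) = l^N + 1 − (α^N + β^N)` for the roots `α, β`
of `f`, and the power sums `α^N + β^N` are integers obeying a linear recurrence. For `a = 0`
they vanish at odd `N`, so the resultants at `N = l^n` tend to `1`. For `a ≠ 0`, Hasse's bound
gives `l ∤ a`, so by Hensel's lemma `f` has a unit root `u` and a root `v = l / u` of norm `< 1`
in `ℤ_l`. Then `v^{l^n} → 0`, while `u^{l^n}` converges (Fermat's little theorem gives
`u^{l^{n+1}} ≡ u^{l^n} mod l^{n+1}`) to a unit, so the limit is `1 − (unit) ≠ 1`.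
-/

namespace IsAlgClosed

theorem exists_add_eq_and_mul_eq {K : Type*} [Field K] [IsAlgClosed K] (a m : K) :
    ∃ α β : K, α + β = a ∧ α * β = m := by
  have hdeg : (X ^ 2 - C a * X + C m).degree = 2 := by compute_degree!
  obtain ⟨α, hα⟩ := IsAlgClosed.exists_root (X ^ 2 - C a * X + C m) (by simp [hdeg])
  refine ⟨α, a - α, by ring, ?_⟩
  simp only [IsRoot, eval_add, eval_sub, eval_mul, eval_pow, eval_C, eval_X] at hα
  linear_combination -hα

theorem prod_nthRoots_one_sub {K : Type*} [Field K] [IsAlgClosed K] {N : ℕ} (hN : N ≠ 0)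
    (α : K) : ((nthRoots N (1 : K)).map (α - ·)).prod = α ^ N - 1 := by
  have h := congrArg (eval α) (prod_multiset_X_sub_C_of_monic_of_roots_card_eq
    (monic_X_pow_sub_C (1 : K) hN) IsAlgClosed.card_roots_eq_natDegree)
  simpa [nthRoots, eval_multiset_prod, Multiset.map_map, Function.comp_def] using h

end IsAlgClosed

def rootPowerSum (a m : ℤ) : ℕ → ℤ
  | 0 => 2
  | 1 => a
  | k + 2 => a * rootPowerSum a m (k + 1) - m * rootPowerSum a m k

theorem rootPowerSum_cast {R : Type*} [CommRing R] {a m : ℤ} {α β : R}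
    (hsum : α + β = a) (hprod : α * β = m) : ∀ k, (rootPowerSum a m k : R) = α ^ k + β ^ k
  | 0 => by norm_num [rootPowerSum]
  | 1 => by simp [rootPowerSum, hsum]
  | k + 2 => by
    rw [rootPowerSum, Int.cast_sub, Int.cast_mul, Int.cast_mul, rootPowerSum_cast hsum hprod k,
      rootPowerSum_cast hsum hprod (k + 1), ← hsum, ← hprod]
    ring

theorem rootPowerSum_zero_of_odd (m : ℤ) {k : ℕ} (hk : Odd k) : rootPowerSum 0 m k = 0 := by
  obtain ⟨α, β, hsum, hprod⟩ := IsAlgClosed.exists_add_eq_and_mul_eq (0 : ℂ) m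
  obtain rfl : β = -α := by linear_combination hsum
  have h := rootPowerSum_cast (a := 0) (by simp) hprod k
  rw [hk.neg_pow, add_neg_cancel] at h
  exact_mod_cast h

theorem cyclicResultantC_quadratic (a m : ℤ) {N : ℕ} (hN : N ≠ 0) :
    cyclicResultantC N (X ^ 2 - C a * X + C m) = ((m ^ N + 1 - rootPowerSum a m N : ℤ) : ℂ) := by
  obtain ⟨α, β, hsum, hprod⟩ := IsAlgClosed.exists_add_eq_and_mul_eq (a : ℂ) m
  have hfactor : ∀ ζ : ℂ, aeval ζ (X ^ 2 - C a * X + C m) = (α - ζ) * (β - ζ) := by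
    intro ζ
    simp only [map_add, map_sub, map_mul, map_pow, aeval_X, aeval_C, algebraMap_int_eq,
      Int.coe_castRingHom, ← hsum, ← hprod]
    ring
  rw [cyclicResultantC, Multiset.map_congr rfl fun ζ _ => hfactor ζ, Multiset.prod_map_mul,
    IsAlgClosed.prod_nthRoots_one_sub hN, IsAlgClosed.prod_nthRoots_one_sub hN]
  push_cast
  rw [rootPowerSum_cast hsum hprod, ← hprod]
  ring

theorem not_dvd_of_sq_le_four_mul {l : ℕ} (hl : 4 < l) {a : ℤ} (ha0 : a ≠ 0)
    (ha : a ^ 2 ≤ 4 * l) : ¬ (l : ℤ) ∣ a := by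
  rintro ⟨b, rfl⟩
  have hb : 0 < b ^ 2 := by
    have : b ≠ 0 := right_ne_zero_of_mul ha0
    positivity
  have hl' : (4 : ℤ) < l := by exact_mod_cast hl
  nlinarith [mul_le_mul_of_nonneg_left (show 1 ≤ b ^ 2 from hb) (sq_nonneg (l : ℤ))]

namespace PadicInt

variable {p : ℕ} [hp : Fact p.Prime]

theorem tendsto_pow_prime_pow_nhds_zero {x : ℤ_[p]} (hx : ‖x‖ < 1) :
    Tendsto (fun n => x ^ p ^ n) atTop (𝓝 0) :=
  (tendsto_pow_atTop_nhds_zero_of_norm_lt_one hx).comp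
    (tendsto_pow_atTop_atTop_of_one_lt hp.out.one_lt)

theorem natCast_dvd_pow_sub_self (x : ℤ_[p]) : (p : ℤ_[p]) ∣ x ^ p - x := by
  have h : toZMod (x ^ p - x) = 0 := by rw [map_sub, map_pow, ZMod.pow_card, sub_self]
  rwa [← RingHom.mem_ker, ker_toZMod, maximalIdeal_eq_span_p, Ideal.mem_span_singleton] at h

theorem dist_pow_prime_pow_succ_le (x : ℤ_[p]) (n : ℕ) :
    dist (x ^ p ^ n) (x ^ p ^ (n + 1)) ≤ (p : ℝ)⁻¹ * (p : ℝ)⁻¹ ^ n := by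
  have hdvd : (p : ℤ_[p]) ^ (n + 1) ∣ x ^ p ^ (n + 1) - x ^ p ^ n := by
    simpa only [← pow_mul, ← pow_succ'] using dvd_sub_pow_of_dvd_sub (natCast_dvd_pow_sub_self x) n
  rw [dist_comm, dist_eq_norm, ← pow_succ', inv_pow, ← zpow_natCast, ← zpow_neg]
  exact (norm_le_pow_iff_mem_span_pow _ _).mpr (Ideal.mem_span_singleton.mpr hdvd)

theorem cauchySeq_pow_prime_pow (x : ℤ_[p]) : CauchySeq fun n => x ^ p ^ n :=
  cauchySeq_of_le_geometric _ _ (inv_lt_one_of_one_lt₀ (mod_cast hp.out.one_lt))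
    (dist_pow_prime_pow_succ_le x)

theorem exists_add_eq_and_mul_eq_of_norm {a m : ℤ_[p]} (ha : ‖a‖ = 1) (hm : ‖m‖ < 1) :
    ∃ u v : ℤ_[p], u + v = a ∧ u * v = m ∧ ‖u‖ = 1 ∧ ‖v‖ < 1 := by
  set F : ℤ_[p][X] := X ^ 2 - C a * X + C m
  have heval : ∀ x, aeval x F = x ^ 2 - a * x + m := by simp [F]
  have hderiv : aeval a (derivative F) = a := by simp [F]; ring
  obtain ⟨u, hu, hua, -, -⟩ := hensels_lemma (F := F) (a := a) (by
    rw [heval, hderiv, ha]; simpa [sq] using hm)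
  rw [heval] at hu
  rw [hderiv] at hua
  have hu1 : ‖u‖ = 1 := by
    rw [← ha, ← norm_neg a]
    exact norm_eq_of_norm_add_lt_right (by rwa [norm_neg, ← sub_eq_add_neg])
  have huv : u * (a - u) = m := by linear_combination -hu
  refine ⟨u, a - u, by ring, huv, hu1, ?_⟩
  simpa [← huv, hu1] using hm

theorem exists_tendsto_rootPowerSum_prime_pow {a m : ℤ} (ha : ¬ (p : ℤ) ∣ a) (hm : (p : ℤ) ∣ m) :
    ∃ L : ℤ_[p], L ≠ 0 ∧ Tendsto (fun n => (rootPowerSum a m (p ^ n) : ℤ_[p])) atTop (𝓝 L) := by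
  have ha1 : ‖(a : ℤ_[p])‖ = 1 :=
    (norm_le_one _).antisymm (not_lt.mp (ha ∘ (norm_int_lt_one_iff_dvd a).mp))
  obtain ⟨u, v, hsum, hprod, hu, hv⟩ :=
    exists_add_eq_and_mul_eq_of_norm ha1 ((norm_int_lt_one_iff_dvd m).mpr hm)
  obtain ⟨L, hL⟩ := cauchySeq_tendsto_of_complete (cauchySeq_pow_prime_pow u)
  have hL1 : ‖L‖ = 1 := tendsto_nhds_unique hL.norm (by simp [hu])
  refine ⟨L, norm_ne_zero_iff.mp (by simp [hL1]), ?_⟩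
  simp only [rootPowerSum_cast hsum hprod]
  simpa using hL.add (tendsto_pow_prime_pow_nhds_zero hv)

end PadicInt

/-- Let `l ≥ 5` be prime, `a ∈ ℤ` with `a² ≤ 4l`, and
`f(t) = t² − a·t + l` (a Frobenius polynomial). Then `lim_n Res(t^{l^n} − 1, f)` exists in
`ℤ_l`, and the limit equals `1` iff `a = 0` (the supersingular case). -/
theorem frobenius_polynomial_cyclic_resultants_supersingular
    (l : ℕ) [hl : Fact l.Prime] (hl5 : 5 ≤ l)
    (a : ℤ) (ha : a ^ 2 ≤ 4 * l)
    (f : Polynomial ℤ)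
    (hf : f = Polynomial.X ^ 2 - Polynomial.C a * Polynomial.X + Polynomial.C (l : ℤ))
    (R : ℕ → ℤ) (hR : ∀ n, ((R n : ℤ) : ℂ) = cyclicResultantC (l ^ n) f) :
    ∃ L : ℤ_[l], Tendsto (fun n => ((R n : ℤ_[l]))) atTop (𝓝 L) ∧ (L = 1 ↔ a = 0) := by
  have hR' : ∀ n, (R n : ℤ_[l]) = (l : ℤ_[l]) ^ l ^ n + 1 - rootPowerSum a l (l ^ n) := by
    intro n
    have h := (hR n).trans (hf ▸ cyclicResultantC_quadratic a l (pow_ne_zero n hl.out.ne_zero))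
    exact_mod_cast congrArg (Int.cast : ℤ → ℤ_[l]) (Int.cast_inj.mp h)
  have hl_pow : Tendsto (fun n => (l : ℤ_[l]) ^ l ^ n + 1) atTop (𝓝 1) := by
    simpa using (PadicInt.tendsto_pow_prime_pow_nhds_zero
      (PadicInt.norm_natCast_lt_one_iff.mpr dvd_rfl)).add_const 1
  simp only [hR']
  by_cases ha0 : a = 0
  · subst ha0
    have hodd : ∀ n, rootPowerSum 0 l (l ^ n) = 0 := fun n =>
      rootPowerSum_zero_of_odd l ((hl.out.odd_of_ne_two (by omega)).pow)
    exact ⟨1, by simpa [hodd] using hl_pow, by simp⟩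
  · obtain ⟨L, hL0, hL⟩ := PadicInt.exists_tendsto_rootPowerSum_prime_pow
      (not_dvd_of_sq_le_four_mul hl5 ha0 ha) (dvd_refl (l : ℤ))
    exact ⟨1 - L, by simpa using hl_pow.sub hL, by simp [ha0, hL0]⟩
end
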